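/- arXiv:0906.4129 — 5 statements merged into one kernel-verified Lean document; each statement's English description precedes it below -/
import Mathlib

section
/- Suppose π = π₁…π_m and ρ = ρ₁…ρ_m are ±-sequences and i ∈ {1,…,m} is such that π_i = −1, ρ_i = +1, and π_j = ρ_j for all j ≠ i. Then ε(π) > 0 with good position i if and only if φ(ρ) > 0 with cogood position i; and if this is the case, then ε(ρ) = ε(π) − 1 and φ(ρ) = φ(π) + 1. -/
/-!  ±-sequences.  A ±-sequence of length `m` is modelled as a function `π : ℕ → ℤ`
whose values at positions `1,…,m` lie in `{+1, 0, -1}` (values elsewhere are irrelevant). -/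

namespace PMSeq

/-- `π` is a ±-sequence of length `m`. -/
def IsPM (m : ℕ) (π : ℕ → ℤ) : Prop :=
  ∀ k, 1 ≤ k → k ≤ m → π k = 1 ∨ π k = 0 ∨ π k = -1

/-- `g_i(π) = -(π₁ + ⋯ + π_i)`, for `0 ≤ i`. -/
def g (π : ℕ → ℤ) (i : ℕ) : ℤ := -(∑ k ∈ Finset.Icc 1 i, π k)

/-- `h_i(π) = π_i + ⋯ + π_m`, for `1 ≤ i ≤ m+1`. -/
def h (m : ℕ) (π : ℕ → ℤ) (i : ℕ) : ℤ := ∑ k ∈ Finset.Icc i m, π k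

/-- `ε(π) = max{g_i(π) : 0 ≤ i ≤ m}` (note `g_0 = 0`). -/
def eps (m : ℕ) (π : ℕ → ℤ) : ℤ := (Finset.Icc 0 m).fold max 0 (g π)

/-- `φ(π) = max{h_i(π) : 1 ≤ i ≤ m+1}` (note `h_{m+1} = 0`). -/
def phi (m : ℕ) (π : ℕ → ℤ) : ℤ := (Finset.Icc 1 (m + 1)).fold max 0 (h m π)

/-- The good position: the smallest `i` with `g_i(π) = ε(π)` (meaningful when `ε(π) > 0`). -/
noncomputable def goodPos (m : ℕ) (π : ℕ → ℤ) : ℕ :=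
  sInf {i | i ≤ m ∧ g π i = eps m π}

/-- The cogood position: the largest `i ∈ {1,…,m+1}` with `h_i(π) = φ(π)`
(meaningful when `φ(π) > 0`). -/
noncomputable def cogoodPos (m : ℕ) (π : ℕ → ℤ) : ℕ :=
  sSup {i | 1 ≤ i ∧ i ≤ m + 1 ∧ h m π i = phi m π}

lemma g_zero (σ : ℕ → ℤ) : g σ 0 = 0 := by simp [g]

lemma g_succ (σ : ℕ → ℤ) (j : ℕ) : g σ (j + 1) = g σ j - σ (j + 1) := by
  simp only [g, Finset.sum_Icc_succ_top (Nat.le_add_left 1 j)]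
  ring

lemma h_succ (m : ℕ) (σ : ℕ → ℤ) (j : ℕ) (hj : j ≤ m) :
    h m σ (j + 1) = g σ j - g σ m := by
  have key : ∑ k ∈ Finset.Ioc 0 j, σ k + ∑ k ∈ Finset.Ioc j m, σ k
      = ∑ k ∈ Finset.Ioc 0 m, σ k := Finset.sum_Ioc_consecutive _ (Nat.zero_le j) hj
  have e1 : Finset.Icc 1 j = Finset.Ioc 0 j := Finset.Icc_add_one_left_eq_Ioc 0 j
  have e2 : Finset.Icc (j+1) m = Finset.Ioc j m := Finset.Icc_add_one_left_eq_Ioc j m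
  have e3 : Finset.Icc 1 m = Finset.Ioc 0 m := Finset.Icc_add_one_left_eq_Ioc 0 m
  simp only [g, h, e1, e2, e3]
  linarith

lemma h_top (m : ℕ) (σ : ℕ → ℤ) : h m σ (m + 1) = 0 := by
  simp [h, Finset.Icc_eq_empty_of_lt (Nat.lt_succ_self m)]

lemma eps_eq_sup' (m : ℕ) (σ : ℕ → ℤ) :
    eps m σ = (Finset.Icc 0 m).sup' ⟨0, by simp⟩ (g σ) := by
  apply le_antisymm
  · rw [eps, Finset.fold_max_le]
    exact ⟨by rw [← g_zero σ]; exact Finset.le_sup' _ (by simp),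
      fun x hx => Finset.le_sup' _ hx⟩
  · apply Finset.sup'_le
    intro x hx
    exact (((Finset.fold_max_le _).mp (le_refl (eps m σ))).2) x hx

lemma phi_eq_sup' (m : ℕ) (σ : ℕ → ℤ) :
    phi m σ = (Finset.Icc 1 (m+1)).sup' ⟨m+1, by simp⟩ (h m σ) := by
  apply le_antisymm
  · rw [phi, Finset.fold_max_le]
    exact ⟨by rw [← h_top m σ]; exact Finset.le_sup' _ (by simp),
      fun x hx => Finset.le_sup' _ hx⟩
  · apply Finset.sup'_le
    intro x hx
    exact (((Finset.fold_max_le _).mp (le_refl (phi m σ))).2) x hx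

lemma le_eps (m : ℕ) (σ : ℕ → ℤ) {j : ℕ} (hj : j ≤ m) : g σ j ≤ eps m σ := by
  rw [eps_eq_sup']; exact Finset.le_sup' _ (by simp [hj])

lemma le_phi (m : ℕ) (σ : ℕ → ℤ) {j : ℕ} (h1 : 1 ≤ j) (h2 : j ≤ m + 1) :
    h m σ j ≤ phi m σ := by
  rw [phi_eq_sup']; exact Finset.le_sup' _ (by simp [h1, h2])

/-- Lemma 3.2 of the paper: if `π` and `ρ` agree except that `π_i = -1` and `ρ_i = +1`,
then `i` is the good position of `π` iff it is the cogood position of `ρ`; and in that case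
`ε(ρ) = ε(π) - 1` and `φ(ρ) = φ(π) + 1`. -/
theorem pm_good_iff_cogood (m : ℕ) (π ρ : ℕ → ℤ) (hπ : IsPM m π) (hρ : IsPM m ρ)
    (i : ℕ) (hi1 : 1 ≤ i) (him : i ≤ m)
    (hπi : π i = -1) (hρi : ρ i = 1) (hagree : ∀ j, j ≠ i → π j = ρ j) :
    ((0 < eps m π ∧ goodPos m π = i) ↔ (0 < phi m ρ ∧ cogoodPos m ρ = i)) ∧
    ((0 < eps m π ∧ goodPos m π = i) →
      eps m ρ = eps m π - 1 ∧ phi m ρ = phi m π + 1) := by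
  obtain ⟨n, rfl⟩ : ∃ n, i = n + 1 := ⟨i - 1, (Nat.succ_pred_eq_of_pos hi1).symm⟩
  have hnm : n + 1 ≤ m := him
  have f1 : g π (n + 1) = g π n + 1 := by rw [g_succ, hπi]; ring
  have hρval : ∀ k, ρ k = π k + (if k = n + 1 then 2 else 0) := by
    intro k
    by_cases hk : k = n + 1
    · subst hk; rw [hρi, hπi]; norm_num
    · rw [hagree k hk]; simp [hk]
  have hgρ : ∀ j, g ρ j = g π j - (if n + 1 ≤ j then 2 else 0) := by
    intro j
    simp only [g, hρval, Finset.sum_add_distrib,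
      Finset.sum_ite_eq' (Finset.Icc 1 j) (n+1) (fun _ => (2:ℤ)), Finset.mem_Icc]
    have : (1 ≤ n + 1 ∧ n + 1 ≤ j) ↔ n + 1 ≤ j := by omega
    rw [if_congr this rfl rfl]
    ring
  have hgρm : g ρ m = g π m - 2 := by rw [hgρ]; simp [hnm]
  have hhρ : ∀ j, j ≤ m → h m ρ (j + 1) =
      (if j ≤ n then g π j + 2 else g π j) - g π m := by
    intro j hj
    rw [h_succ m ρ j hj, hgρ j, hgρm]
    by_cases hc : n + 1 ≤ j
    · have h2 : ¬ j ≤ n := by omega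
      rw [if_pos hc, if_neg h2]; ring
    · have h2 : j ≤ n := by omega
      rw [if_neg hc, if_pos h2]; ring
  have hhπ : ∀ j, j ≤ m → h m π (j + 1) = g π j - g π m := fun j hj => h_succ m π j hj
  set C : Prop := (∀ j, j ≤ n → g π j ≤ g π n) ∧
      (∀ j, n + 1 ≤ j → j ≤ m → g π j ≤ g π (n + 1)) with hC
  have epsS : Set.Nonempty {j | j ≤ m ∧ g π j = eps m π} := by
    obtain ⟨j, hj, hje⟩ := Finset.exists_mem_eq_sup' (⟨0, by simp⟩ :
      (Finset.Icc 0 m).Nonempty) (g π)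
    exact ⟨j, by simpa using hj, by rw [eps_eq_sup']; exact hje.symm⟩
  have left_of_C : C → 0 < eps m π ∧ goodPos m π = n + 1 := by
    rintro ⟨c1, c2⟩
    have hpos : 0 < g π (n + 1) := by
      have := c1 0 (Nat.zero_le n); rw [g_zero] at this; omega
    have heps : eps m π = g π (n + 1) := by
      apply le_antisymm
      · rw [eps_eq_sup']
        apply Finset.sup'_le
        intro x hx
        simp only [Finset.mem_Icc] at hx
        by_cases hxn : x ≤ n
        · have := c1 x hxn; omega
        · exact c2 x (by omega) hx.2
      · exact le_eps m π hnm
    refine ⟨by omega, ?_⟩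
    have hmem : n + 1 ∈ {j | j ≤ m ∧ g π j = eps m π} := ⟨hnm, heps.symm⟩
    apply le_antisymm (Nat.sInf_le hmem)
    by_contra hlt
    push_neg at hlt
    have hin := Nat.sInf_mem ⟨n+1, hmem⟩
    have hgl : goodPos m π = sInf {j | j ≤ m ∧ g π j = eps m π} := rfl
    rw [← hgl] at hin
    have hk : goodPos m π ≤ n := by omega
    have := c1 _ hk
    have := hin.2
    omega
  have C_of_left : (0 < eps m π ∧ goodPos m π = n + 1) → C := by
    rintro ⟨hpos, hgood⟩
    have hgood' : sInf {j | j ≤ m ∧ g π j = eps m π} = n + 1 := hgood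
    have hin := Nat.sInf_mem epsS
    rw [hgood'] at hin
    obtain ⟨-, heq⟩ := hin
    constructor
    · intro j hj
      have h1 : g π j ≤ eps m π := le_eps m π (by omega)
      have h2 : g π j ≠ eps m π := by
        intro hje
        have : sInf {j | j ≤ m ∧ g π j = eps m π} ≤ j := Nat.sInf_le ⟨by omega, hje⟩
        omega
      omega
    · intro j hj1 hj2
      have := le_eps m π hj2
      omega
  have cogoodBdd : BddAbove {j | 1 ≤ j ∧ j ≤ m + 1 ∧ h m ρ j = phi m ρ} :=
    ⟨m + 1, fun x hx => hx.2.1⟩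
  have hval : h m ρ (n + 1) = g π n + 2 - g π m := by
    rw [hhρ n (by omega)]; simp
  have right_of_C : C → 0 < phi m ρ ∧ cogoodPos m ρ = n + 1 := by
    rintro ⟨c1, c2⟩
    have h0 : 0 ≤ g π n := by have := c1 0 (Nat.zero_le n); rw [g_zero] at this; omega
    have hm' : g π m ≤ g π (n + 1) := c2 m (by omega) le_rfl
    have hphi : phi m ρ = h m ρ (n + 1) := by
      apply le_antisymm
      · rw [phi_eq_sup']
        apply Finset.sup'_le
        intro x hx
        simp only [Finset.mem_Icc] at hx
        obtain ⟨j, rfl⟩ : ∃ j, x = j + 1 := ⟨x - 1, by omega⟩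
        rw [hhρ j (by omega), hval]
        by_cases hjn : j ≤ n
        · have := c1 j hjn; rw [if_pos hjn]; omega
        · have := c2 j (by omega) (by omega); rw [if_neg hjn, f1] at *; omega
      · exact le_phi m ρ (by omega) (by omega)
    have hpos : 0 < phi m ρ := by rw [hphi, hval]; omega
    refine ⟨hpos, ?_⟩
    have hmem : n + 1 ∈ {j | 1 ≤ j ∧ j ≤ m + 1 ∧ h m ρ j = phi m ρ} :=
      ⟨by omega, by omega, hphi.symm⟩
    apply le_antisymm
    · apply csSup_le ⟨n+1, hmem⟩
      rintro x ⟨hx1, hx2, hx3⟩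
      by_contra hlt
      push_neg at hlt
      obtain ⟨j, rfl⟩ : ∃ j, x = j + 1 := ⟨x - 1, by omega⟩
      have hjm : j ≤ m := by omega
      have hjn : ¬ j ≤ n := by omega
      rw [hhρ j hjm, if_neg hjn, hphi, hval] at hx3
      have := c2 j (by omega) hjm
      rw [f1] at this
      omega
    · exact le_csSup cogoodBdd hmem
  have C_of_right : (0 < phi m ρ ∧ cogoodPos m ρ = n + 1) → C := by
    rintro ⟨hpos, hco⟩
    have hco' : sSup {j | 1 ≤ j ∧ j ≤ m + 1 ∧ h m ρ j = phi m ρ} = n + 1 := hco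
    have hS : Set.Nonempty {j | 1 ≤ j ∧ j ≤ m + 1 ∧ h m ρ j = phi m ρ} := by
      by_contra hemp
      rw [Set.not_nonempty_iff_eq_empty] at hemp
      rw [hemp, csSup_empty] at hco'
      simp at hco'
    have hin := Nat.sSup_mem hS cogoodBdd
    rw [hco'] at hin
    obtain ⟨-, -, heq⟩ := hin
    constructor
    · intro j hj
      have h1 : h m ρ (j + 1) ≤ phi m ρ := le_phi m ρ (by omega) (by omega)
      rw [← heq, hval] at h1
      rw [hhρ j (by omega), if_pos hj] at h1
      omega
    · intro j hj1 hj2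
      have h1 : h m ρ (j + 1) ≤ phi m ρ := le_phi m ρ (by omega) (by omega)
      have h2 : h m ρ (j + 1) ≠ phi m ρ := by
        intro hje
        have : j + 1 ≤ sSup {j | 1 ≤ j ∧ j ≤ m + 1 ∧ h m ρ j = phi m ρ} :=
          le_csSup cogoodBdd ⟨by omega, by omega, hje⟩
        omega
      rw [← heq, hval] at h1 h2
      have hjn : ¬ j ≤ n := by omega
      rw [hhρ j (by omega), if_neg hjn] at h1 h2
      rw [f1]
      omega
  have quant : C → eps m ρ = eps m π - 1 ∧ phi m ρ = phi m π + 1 := by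
    rintro ⟨c1, c2⟩
    have h0 : 0 ≤ g π n := by have := c1 0 (Nat.zero_le n); rw [g_zero] at this; omega
    have hm' : g π m ≤ g π (n + 1) := c2 m (by omega) le_rfl
    have hepsπ : eps m π = g π (n + 1) := by
      apply le_antisymm
      · rw [eps_eq_sup']
        apply Finset.sup'_le
        intro x hx
        simp only [Finset.mem_Icc] at hx
        by_cases hxn : x ≤ n
        · have := c1 x hxn; omega
        · exact c2 x (by omega) hx.2
      · exact le_eps m π hnm
    have hepsρ : eps m ρ = g π n := by
      apply le_antisymm
      · rw [eps_eq_sup']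
        apply Finset.sup'_le
        intro x hx
        simp only [Finset.mem_Icc] at hx
        rw [hgρ]
        by_cases hxn : n + 1 ≤ x
        · have := c2 x hxn hx.2; rw [if_pos hxn, f1] at *; omega
        · have := c1 x (by omega); rw [if_neg hxn]; omega
      · have hle := le_eps m ρ (j := n) (by omega)
        rw [hgρ, if_neg (by omega : ¬ n + 1 ≤ n)] at hle
        linarith
    have hphiπ : phi m π = g π (n + 1) - g π m := by
      apply le_antisymm
      · rw [phi_eq_sup']
        apply Finset.sup'_le
        intro x hx
        simp only [Finset.mem_Icc] at hx
        obtain ⟨j, rfl⟩ : ∃ j, x = j + 1 := ⟨x - 1, by omega⟩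
        rw [hhπ j (by omega)]
        by_cases hjn : j ≤ n
        · have := c1 j hjn; rw [f1]; omega
        · have := c2 j (by omega) (by omega); omega
      · have hle := le_phi m π (j := n + 2) (by omega) (by omega)
        rw [show n + 2 = (n + 1) + 1 from rfl, hhπ (n+1) hnm] at hle
        exact hle
    have hphiρ : phi m ρ = g π n + 2 - g π m := by
      apply le_antisymm
      · rw [phi_eq_sup']
        apply Finset.sup'_le
        intro x hx
        simp only [Finset.mem_Icc] at hx
        obtain ⟨j, rfl⟩ : ∃ j, x = j + 1 := ⟨x - 1, by omega⟩
        rw [hhρ j (by omega)]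
        by_cases hjn : j ≤ n
        · have := c1 j hjn; rw [if_pos hjn]; omega
        · have := c2 j (by omega) (by omega); rw [if_neg hjn, f1] at *; omega
      · have hle := le_phi m ρ (j := n + 1) (by omega) (by omega)
        rw [hval] at hle
        exact hle
    exact ⟨by rw [hepsρ, hepsπ, f1]; ring, by rw [hphiρ, hphiπ, f1]; ring⟩
  exact ⟨⟨fun hl => right_of_C (C_of_left hl), fun hr => left_of_C (C_of_right hr)⟩,
    fun hl => quant (C_of_left hl)⟩

end PMSeq
end

section
/- Suppose S is a biorder and a is a configuration for S for which there exist s, t ∈ S with s ⋗ t, t ▷ s, Γ(s) = Γ(t) and a(s) < a(t). Then there exist s, t, r ∈ S such that s ≫ t, t ⋗ r, r ⋗ s, Γ(s) = Γ(t) and a(s) < a(t). -/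
/-!  Biorders and configurations (Section 4 of the paper).

A biorder is a finite set `S` with two linear orders `>_i`, `>_j` and a labelling
`Γ : S → {i, j}` (here modelled by `Bool`, with `true` standing for the label `i` and
`false` for the label `j`), such that `s >_i t` and `t >_j s` force `Γ s = j` and `Γ t = i`.

A configuration is a function `a : S → ℕ` taking values in `{0, 1, 2}`.

All signature-related notions are defined relative to a finite subset `T ⊆ S`
(the biorder restricted to `T`); the notions for the biorder `S` itself are recovered
by taking `T = Finset.univ`. -/

attribute [local instance] Classical.propDecidable

namespace BiorderCrystal

structure Biorder (S : Type) where
  /-- the linear order whose strict relation is `<_i` -/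
  li : LinearOrder S
  /-- the linear order whose strict relation is `<_j` -/
  lj : LinearOrder S
  /-- the labelling `Γ : S → {i, j}`; `true` means label `i`, `false` means label `j` -/
  lab : S → Bool
  /-- if `s >_i t` and `t >_j s` then `Γ s = j` and `Γ t = i` -/
  compat : ∀ s t : S, li.lt t s → lj.lt s t → lab s = false ∧ lab t = true

variable {S : Type}

/-- `s <_i t`. -/
def Biorder.lti (B : Biorder S) (s t : S) : Prop := B.li.lt s t

/-- `s <_j t`. -/
def Biorder.ltj (B : Biorder S) (s t : S) : Prop := B.lj.lt s t

/-- The order used for the `h`-signature: `>_i` if `h = true`, `>_j` if `h = false`. -/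
def Biorder.ord (B : Biorder S) (h : Bool) : LinearOrder S := if h then B.li else B.lj

/-- `s ≫ t`, i.e. `s >_i t` and `s >_j t`. -/
def Biorder.gg (B : Biorder S) (s t : S) : Prop := B.lti t s ∧ B.ltj t s

/-- `s ⋗ t`, i.e. `s >_i t` or `s >_j t`. -/
def Biorder.gd (B : Biorder S) (s t : S) : Prop := B.lti t s ∨ B.ltj t s

/-- `▷`, the transitive closure of `⋗`, computed within the subset `T`. -/
def Biorder.triOn (B : Biorder S) (T : Finset S) : S → S → Prop :=
  Relation.TransGen (fun s t => s ∈ T ∧ t ∈ T ∧ B.gd s t)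

/-- The sign `π_h(a, s) ∈ {+1, 0, -1}` contributed by `s` to the `h`-signature of `a`. -/
def sgn (B : Biorder S) (h : Bool) (a : S → ℕ) (s : S) : ℤ :=
  if (a s = 0 ∧ B.lab s = h) ∨ (a s = 1 ∧ B.lab s ≠ h) then 1
  else if (a s = 1 ∧ B.lab s = h) ∨ (a s = 2 ∧ B.lab s ≠ h) then -1
  else 0

variable [Fintype S]

/-- Minus the partial sum of the `h`-signature of `a` (over `T`) along the positions
up to and including that of `s`: the elements of `T` which are `≥ s` in the order `ord h`. -/
noncomputable def G (B : Biorder S) (h : Bool) (T : Finset S) (a : S → ℕ) (s : S) : ℤ :=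
  -(∑ t ∈ T.filter (fun t => (B.ord h).le s t), sgn B h a t)

/-- The sum of the `h`-signature of `a` (over `T`) from the position of `s` onwards:
the elements of `T` which are `≤ s` in the order `ord h`. -/
noncomputable def H (B : Biorder S) (h : Bool) (T : Finset S) (a : S → ℕ) (s : S) : ℤ :=
  ∑ t ∈ T.filter (fun t => (B.ord h).le t s), sgn B h a t

/-- `ε_h(a)` (over `T`): the maximum of `0` and all the partial sums `G`. -/
noncomputable def epsB (B : Biorder S) (h : Bool) (T : Finset S) (a : S → ℕ) : ℤ :=
  T.fold max 0 (G B h T a)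

/-- `φ_h(a)` (over `T`): the maximum of `0` and all the partial sums `H`. -/
noncomputable def phiB (B : Biorder S) (h : Bool) (T : Finset S) (a : S → ℕ) : ℤ :=
  T.fold max 0 (H B h T a)

/-- The `h`-good element of `T` for `a`:  the element in the good position of the
`h`-signature, i.e. the `ord h`-greatest element achieving `G = ε_h > 0` (or `none`). -/
noncomputable def goodElt (B : Biorder S) (h : Bool) (T : Finset S) (a : S → ℕ) : Option S :=
  if hne : (T.filter fun s => 0 < epsB B h T a ∧ G B h T a s = epsB B h T a).Nonempty
  then some (@Finset.max' S (B.ord h) _ hne)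
  else none

/-- The `h`-cogood element of `T` for `a`: the element in the cogood position of the
`h`-signature, i.e. the `ord h`-least element achieving `H = φ_h > 0` (or `none`). -/
noncomputable def cogoodElt (B : Biorder S) (h : Bool) (T : Finset S) (a : S → ℕ) : Option S :=
  if hne : (T.filter fun s => 0 < phiB B h T a ∧ H B h T a s = phiB B h T a).Nonempty
  then some (@Finset.min' S (B.ord h) _ hne)
  else none

/-- The crystal operator `ẽ_h` (over `T`): decrease `a` by one at the `h`-good element,
or `none` (the ghost element `0`) if there is no good position. -/
noncomputable def et (B : Biorder S) (h : Bool) (T : Finset S) (a : S → ℕ) :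
    Option (S → ℕ) :=
  (goodElt B h T a).map fun s => Function.update a s (a s - 1)

/-- The crystal operator `f̃_h` (over `T`): increase `a` by one at the `h`-cogood element,
or `none` (the ghost element `0`) if there is no cogood position. -/
noncomputable def ft (B : Biorder S) (h : Bool) (T : Finset S) (a : S → ℕ) :
    Option (S → ℕ) :=
  (cogoodElt B h T a).map fun s => Function.update a s (a s + 1)

/-- `a` is a good configuration for the biorder restricted to `T`:
axioms G1, G2, G3 of the paper. -/
def IsGoodOn (B : Biorder S) (T : Finset S) (a : S → ℕ) : Prop :=
  (¬ ∃ s ∈ T, ∃ t ∈ T, B.lti t s ∧ B.ltj s t ∧ a s = 1 ∧ a t = 1) ∧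
  (¬ ∃ s ∈ T, ∃ t ∈ T, B.gd s t ∧ B.triOn T t s ∧ B.lab s = B.lab t ∧ a s < a t) ∧
  (¬ ∃ q ∈ T, ∃ r ∈ T, ∃ s ∈ T, ∃ t ∈ T,
      B.gd q r ∧ B.gg r s ∧ B.gd s t ∧ B.gg r t ∧ B.gd t q ∧ B.gg q s ∧
      a q = 2 ∧ a s = 2 ∧ a r = 0 ∧ a t = 0)

end BiorderCrystal

/-! Equal labels upgrade `s ⋗ t` to `s ≫ t`. If no `r` closes a triangle `t ⋗ r ⋗ s`, the path
`t ▷ s` forces an `x` with `s ≫ x ≫ t` and `Γ x = Γ s`: for the label `i`, the `i`-least element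
`j`-above `t`; the label `j` reduces to this by exchanging the two orders. Since `a s < a t`, one of
`(s, x)`, `(x, t)` is again a violation, with a strictly shorter `i`-interval, and we induct. -/

namespace BiorderCrystal.Biorder

variable {S : Type} (B : Biorder S)

theorem lti_trans {x y z : S} (hxy : B.lti x y) (hyz : B.lti y z) : B.lti x z :=
  @lt_trans S B.li.toPreorder x y z hxy hyz

theorem ltj_trans {x y z : S} (hxy : B.ltj x y) (hyz : B.ltj y z) : B.ltj x z :=
  @lt_trans S B.lj.toPreorder x y z hxy hyz

theorem lti_irrefl (x : S) : ¬ B.lti x x := @lt_irrefl S B.li.toPreorder x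

theorem ltj_irrefl (x : S) : ¬ B.ltj x x := @lt_irrefl S B.lj.toPreorder x

theorem ltj_asymm {x y : S} (h : B.ltj x y) : ¬ B.ltj y x := @lt_asymm S B.lj.toPreorder x y h

theorem lti_trichotomy (x y : S) : B.lti x y ∨ x = y ∨ B.lti y x := @lt_trichotomy S B.li x y

theorem ltj_trichotomy (x y : S) : B.ltj x y ∨ x = y ∨ B.ltj y x := @lt_trichotomy S B.lj x y

theorem lti_wellFounded [Finite S] : WellFounded B.lti := by
  let := B.li
  exact wellFounded_lt

theorem ltj_of_lti {x y : S} (h : B.lti x y) (hl : B.lab y = true ∨ B.lab x = false) :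
    B.ltj x y := by
  rcases B.ltj_trichotomy x y with hxy | rfl | hyx
  · exact hxy
  · exact absurd h (B.lti_irrefl x)
  · have := B.compat y x h hyx
    simp_all

theorem lti_of_ltj {x y : S} (h : B.ltj x y) (hl : B.lab x = true ∨ B.lab y = false) :
    B.lti x y := by
  rcases B.lti_trichotomy x y with hxy | rfl | hyx
  · exact hxy
  · exact absurd h (B.ltj_irrefl x)
  · have := B.compat x y hyx h
    simp_all

theorem gg_of_gd_of_lab_eq {s t : S} (h : B.gd s t) (hl : B.lab s = B.lab t) : B.gg s t := by
  rcases h with hi | hj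
  · exact ⟨hi, B.ltj_of_lti hi (by rw [hl]; exact Bool.eq_false_or_eq_true _)⟩
  · exact ⟨B.lti_of_ltj hj (by rw [hl]; exact Bool.eq_false_or_eq_true _), hj⟩

def swap : Biorder S where
  li := B.lj
  lj := B.li
  lab s := !B.lab s
  compat s t h₁ h₂ := by simp [B.compat t s h₂ h₁]

theorem swap_gd {s t : S} : B.swap.gd s t ↔ B.gd s t := Or.comm

theorem swap_gg {s t : S} : B.swap.gg s t ↔ B.gg s t := And.comm

theorem exists_ltj_lti_of_transGen {s t : S} (hgg : B.gg s t) (htri : Relation.TransGen B.gd t s)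
    (hnr : ∀ r, B.gd t r → ¬ B.gd r s) : ∃ y, B.ltj t y ∧ B.lti y s := by
  by_contra! hmin
  -- `{z | z <_i s ∧ ¬ t <_j z}` contains `t`, is closed under `⋗`, and misses `s`.
  have step : ∀ y z, B.lti y s ∧ ¬ B.ltj t y → B.gd y z → B.lti z s ∧ ¬ B.ltj t z := by
    rintro y z ⟨hys, hty⟩ (hzy | hzy)
    · have hzs := B.lti_trans hzy hys
      exact ⟨hzs, fun htz => hmin z htz hzs⟩
    · have hzt : B.ltj z t := by
        rcases B.ltj_trichotomy y t with hyt | rfl | hyt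
        · exact B.ltj_trans hzy hyt
        · exact hzy
        · exact absurd hyt hty
      refine ⟨?_, B.ltj_asymm hzt⟩
      rcases B.lti_trichotomy z s with hzs | rfl | hsz
      · exact hzs
      · exact absurd hgg.2 (B.ltj_asymm hzt)
      · exact absurd (Or.inl hsz) (hnr z (Or.inr hzt))
  exact htri.closed' (P := fun z => ¬ (B.lti z s ∧ ¬ B.ltj t z))
    (fun hyz hz hy => hz (step _ _ hy hyz)) (fun h => B.lti_irrefl s h.1) ⟨hgg.1, B.ltj_irrefl t⟩

theorem exists_gg_between_of_lab_true [Finite S] {s t : S} (hgg : B.gg s t)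
    (htri : Relation.TransGen B.gd t s) (hs : B.lab s = true) (ht : B.lab t = true)
    (hnr : ∀ r, B.gd t r → ¬ B.gd r s) : ∃ x, B.gg s x ∧ B.gg x t ∧ B.lab x = true := by
  obtain ⟨y, hty, hys⟩ := B.exists_ltj_lti_of_transGen hgg htri hnr
  obtain ⟨x, htx, hmin⟩ := B.lti_wellFounded.has_min {z | B.ltj t z} ⟨y, hty⟩
  have hxs : B.lti x s := by
    rcases B.lti_trichotomy y x with hyx | rfl | hxy
    · exact absurd hyx (hmin y hty)
    · exact hys
    · exact B.lti_trans hxy hys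
  refine ⟨x, ⟨hxs, B.ltj_of_lti hxs (.inl hs)⟩, ⟨B.lti_of_ltj htx (.inl ht), htx⟩, ?_⟩
  by_contra hx
  replace hx : B.lab x = false := by simpa using hx
  -- As `Γ x = j`, `{z | z <_j x}` is closed under `⋗`; it contains `t` but not `s`.
  have step : ∀ y z, B.ltj y x → B.gd y z → B.ltj z x := by
    rintro y z hyx (hzy | hzy)
    · have hzx := B.lti_trans hzy (B.lti_of_ltj hyx (.inr hx))
      rcases B.ltj_trichotomy z x with h | rfl | h
      · exact h
      · exact absurd hzx (B.lti_irrefl z)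
      · exact absurd hzx (hmin z (B.ltj_trans htx h))
    · exact B.ltj_trans hzy hyx
  exact htri.closed' (P := fun z => ¬ B.ltj z x) (fun hyz hz hy => hz (step _ _ hy hyz))
    (B.ltj_asymm (B.ltj_of_lti hxs (.inl hs))) htx

theorem exists_gg_between [Finite S] {s t : S} (hgg : B.gg s t)
    (htri : Relation.TransGen B.gd t s) (hlab : B.lab s = B.lab t)
    (hnr : ∀ r, B.gd t r → ¬ B.gd r s) : ∃ x, B.gg s x ∧ B.gg x t ∧ B.lab x = B.lab s := by
  cases hs : B.lab s
  · obtain ⟨x, hsx, hxt, hx⟩ := B.swap.exists_gg_between_of_lab_true (B.swap_gg.2 hgg)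
      (Relation.TransGen.mono (fun _ _ => B.swap_gd.2) t s htri) (by simp [swap, hs])
      (by simp [swap, ← hlab, hs])
      (fun r htr hrs => hnr r (B.swap_gd.1 htr) (B.swap_gd.1 hrs))
    exact ⟨x, B.swap_gg.1 hsx, B.swap_gg.1 hxt, by simpa [swap] using hx⟩
  · exact B.exists_gg_between_of_lab_true hgg htri hs (hlab ▸ hs) hnr

def betweenI (t s : S) : Set S := {y | B.lti t y ∧ B.lti y s}

theorem betweenI_ssubset_left {t x s : S} (htx : B.lti t x) (hxs : B.lti x s) :
    B.betweenI x s ⊂ B.betweenI t s :=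
  ⟨fun _ hy => ⟨B.lti_trans htx hy.1, hy.2⟩, fun h => B.lti_irrefl x (h ⟨htx, hxs⟩).1⟩

theorem betweenI_ssubset_right {t x s : S} (htx : B.lti t x) (hxs : B.lti x s) :
    B.betweenI t x ⊂ B.betweenI t s :=
  ⟨fun _ hy => ⟨hy.1, B.lti_trans hy.2 hxs⟩, fun h => B.lti_irrefl x (h ⟨htx, hxs⟩).2⟩

theorem exists_triangle_of_gg [Finite S] {α : Type*} [LinearOrder α] (a : S → α) {s t : S}
    (hgg : B.gg s t) (htri : Relation.TransGen B.gd t s) (hlab : B.lab s = B.lab t)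
    (ha : a s < a t) :
    ∃ s t r : S, B.gg s t ∧ B.gd t r ∧ B.gd r s ∧ B.lab s = B.lab t ∧ a s < a t := by
  induction hn : (B.betweenI t s).ncard using Nat.strong_induction_on generalizing s t with
  | _ n ih =>
  by_cases hr : ∃ r, B.gd t r ∧ B.gd r s
  · obtain ⟨r, htr, hrs⟩ := hr
    exact ⟨s, t, r, hgg, htr, hrs, hlab, ha⟩
  obtain ⟨x, hsx, hxt, hlx⟩ :=
    B.exists_gg_between hgg htri hlab fun r htr hrs => hr ⟨r, htr, hrs⟩
  rcases lt_or_ge (a s) (a x) with hax | hax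
  · exact ih _ (hn ▸ Set.ncard_lt_ncard (B.betweenI_ssubset_left hxt.1 hsx.1)) hsx
      (.head (.inl hxt.1) htri) hlx.symm hax rfl
  · exact ih _ (hn ▸ Set.ncard_lt_ncard (B.betweenI_ssubset_right hxt.1 hsx.1)) hxt
      (htri.tail (.inl hsx.1)) (hlx.trans hlab) (hax.trans_lt ha) rfl

end BiorderCrystal.Biorder

namespace BiorderCrystal

theorem good_axiom_G2_triangle_general (S : Type) [Fintype S] (B : Biorder S)
    (a : S → ℕ)
    (hex : ∃ s t : S, B.gd s t ∧ B.triOn Finset.univ t s ∧ B.lab s = B.lab t ∧ a s < a t) :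
    ∃ s t r : S, B.gg s t ∧ B.gd t r ∧ B.gd r s ∧ B.lab s = B.lab t ∧ a s < a t := by
  obtain ⟨s, t, hst, htri, hlab, ha⟩ := hex
  exact B.exists_triangle_of_gg a (B.gg_of_gd_of_lab_eq hst hlab)
    (Relation.TransGen.mono (fun _ _ h => h.2.2) t s htri) hlab ha

/-- Lemma 4.7 of the paper: a violation of axiom G2 can be chosen in triangle form:
there are `s, t, r` with `s ≫ t ⋗ r ⋗ s`, `Γ(s) = Γ(t)` and `a(s) < a(t)`. -/
theorem good_axiom_G2_triangle (S : Type) [Fintype S] (B : Biorder S)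
    (a : S → ℕ) (ha : ∀ s, a s ≤ 2)
    (hex : ∃ s t : S, B.gd s t ∧ B.triOn Finset.univ t s ∧ B.lab s = B.lab t ∧ a s < a t) :
    ∃ s t r : S, B.gg s t ∧ B.gd t r ∧ B.gd r s ∧ B.lab s = B.lab t ∧ a s < a t :=
  good_axiom_G2_triangle_general S B a hex

end BiorderCrystal
end

section
/- Suppose S is a biorder and a, b are configurations for S with b = ẽ_i a (in particular ẽ_i a ≠ 0). If φ_j(a) = 0, then ε_j(b) = ε_j(a) + 1 and φ_j(b) = φ_j(a). If φ_j(a) > 0, let t be the i-good element of S for a and s the j-cogood element of S for a; then: (1) if t >_j s, then ε_j(b) = ε_j(a) + 1 and φ_j(b) = φ_j(a); (2) if s ≥_j t, then ε_j(b) = ε_j(a) and φ_j(b) = φ_j(a) − 1, and if in addition ε_j(a) > 0, then the j-good element for b equals the j-good element for a. -/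
/-!  Biorders and configurations (Section 4 of the paper).

A biorder is a finite set `S` with two linear orders `>_i`, `>_j` and a labelling
`Γ : S → {i, j}` (here modelled by `Bool`, with `true` standing for the label `i` and
`false` for the label `j`), such that `s >_i t` and `t >_j s` force `Γ s = j` and `Γ t = i`.

A configuration is a function `a : S → ℕ` taking values in `{0, 1, 2}`.

All signature-related notions are defined relative to a finite subset `T ⊆ S`
(the biorder restricted to `T`); the notions for the biorder `S` itself are recovered
by taking `T = Finset.univ`. -/

attribute [local instance] Classical.propDecidable

/-!
Write `σ` for the `j`-signature and `P D` for the sum of `σ` over an initial segment `D` of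
the order `<_j`. Then `φ_j` is the largest value of `P` and `ε_j = φ_j - P S`. The `i`-good
element `t` has `i`-sign `-1`, so `ẽ_i` lowers the `j`-sign at `t` by exactly one: `P` drops by
one on the segments containing `t` and is unchanged on the others. Hence `ε_j - φ_j` grows by
one, and it remains to see how `φ_j` changes. The shortest segment on which `P` is maximal ends
at the `j`-cogood element `s`. If `t >_j s` it avoids `t`, so `φ_j` is kept; if `t ≤_j s`, every
segment avoiding `t` is shorter, hence not maximal, so `φ_j` drops by one. In that case the
partial sums `G` at positions `≤_j t` are also below `ε_j`, so the `j`-good element lies beyond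
`t`, where `G` is unchanged.
-/

-- Reopened so that the section variable `[Fintype S]` is not added to the lemmas below.
namespace BiorderCrystal

open Finset

variable {S : Type}

section InitialSegments

variable (L : LinearOrder S) (T : Finset S)

def IsInitialIn (D : Finset S) : Prop :=
  D ⊆ T ∧ ∀ y ∈ D, ∀ z ∈ T, L.le z y → z ∈ D

def IsFinalIn (U : Finset S) : Prop :=
  U ⊆ T ∧ ∀ y ∈ U, ∀ z ∈ T, L.le y z → z ∈ U

theorem isInitialIn_self : IsInitialIn L T T :=
  ⟨subset_rfl, fun _ _ _ hz _ => hz⟩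

theorem isFinalIn_self : IsFinalIn L T T :=
  ⟨subset_rfl, fun _ _ _ hz _ => hz⟩

theorem isInitialIn_filter_not_le (x : S) : IsInitialIn L T (T.filter fun y => ¬ L.le x y) := by
  let _ := L
  exact ⟨filter_subset _ T, fun y hy z hz hzy =>
    mem_filter.2 ⟨hz, fun hxz => (mem_filter.1 hy).2 (le_trans hxz hzy)⟩⟩

theorem isFinalIn_filter_not_le (x : S) : IsFinalIn L T (T.filter fun y => ¬ L.le y x) := by
  let _ := L
  exact ⟨filter_subset _ T, fun y hy z hz hyz =>
    mem_filter.2 ⟨hz, fun hzx => (mem_filter.1 hy).2 (le_trans hyz hzx)⟩⟩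

variable {L T}

theorem IsInitialIn.exists_eq_filter_le {D : Finset S} (hD : IsInitialIn L T D)
    (hne : D.Nonempty) : ∃ p ∈ D, D = T.filter (fun z => L.le z p) := by
  let _ := L
  refine ⟨D.max' hne, D.max'_mem hne, ?_⟩
  ext z
  simp only [mem_filter]
  exact ⟨fun hz => ⟨hD.1 hz, D.le_max' z hz⟩, fun hz => hD.2 _ (D.max'_mem hne) z hz.1 hz.2⟩

theorem IsFinalIn.exists_eq_filter_ge {U : Finset S} (hU : IsFinalIn L T U)
    (hne : U.Nonempty) : ∃ p ∈ U, U = T.filter (fun z => L.le p z) := by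
  let _ := L
  refine ⟨U.min' hne, U.min'_mem hne, ?_⟩
  ext z
  simp only [mem_filter]
  exact ⟨fun hz => ⟨hU.1 hz, U.min'_le z hz⟩, fun hz => hU.2 _ (U.min'_mem hne) z hz.1 hz.2⟩

end InitialSegments

section Signature

variable (B : Biorder S) (h : Bool) (T : Finset S) (c : S → ℕ)

theorem neg_one_le_sgn (x : S) : -1 ≤ sgn B h c x := by
  unfold sgn; split_ifs <;> norm_num

theorem G_le_epsB {x : S} (hx : x ∈ T) : G B h T c x ≤ epsB B h T c :=
  (le_fold_max _).2 (Or.inr ⟨x, hx, le_rfl⟩)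

theorem epsB_nonneg : 0 ≤ epsB B h T c :=
  (le_fold_max _).2 (Or.inl le_rfl)

theorem epsB_le_iff {z : ℤ} : epsB B h T c ≤ z ↔ 0 ≤ z ∧ ∀ x ∈ T, G B h T c x ≤ z :=
  fold_max_le _

theorem exists_G_eq_epsB (hε : 0 < epsB B h T c) : ∃ x ∈ T, G B h T c x = epsB B h T c := by
  obtain ⟨x, hx, hle⟩ := ((le_fold_max _).1 (le_refl (epsB B h T c))).resolve_left hε.not_ge
  exact ⟨x, hx, le_antisymm (G_le_epsB B h T c hx) hle⟩

theorem H_le_phiB {x : S} (hx : x ∈ T) : H B h T c x ≤ phiB B h T c :=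
  (le_fold_max _).2 (Or.inr ⟨x, hx, le_rfl⟩)

theorem phiB_nonneg : 0 ≤ phiB B h T c :=
  (le_fold_max _).2 (Or.inl le_rfl)

theorem phiB_le_iff {z : ℤ} : phiB B h T c ≤ z ↔ 0 ≤ z ∧ ∀ x ∈ T, H B h T c x ≤ z :=
  fold_max_le _

theorem sum_le_phiB_of_isInitialIn {D : Finset S} (hD : IsInitialIn (B.ord h) T D) :
    ∑ y ∈ D, sgn B h c y ≤ phiB B h T c := by
  rcases D.eq_empty_or_nonempty with rfl | hne
  · simpa using phiB_nonneg B h T c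
  obtain ⟨p, hp, rfl⟩ := hD.exists_eq_filter_le hne
  exact H_le_phiB B h T c (mem_filter.1 hp).1

theorem neg_sum_le_epsB_of_isFinalIn {U : Finset S} (hU : IsFinalIn (B.ord h) T U) :
    -∑ y ∈ U, sgn B h c y ≤ epsB B h T c := by
  rcases U.eq_empty_or_nonempty with rfl | hne
  · simpa using epsB_nonneg B h T c
  obtain ⟨p, hp, rfl⟩ := hU.exists_eq_filter_ge hne
  exact G_le_epsB B h T c (mem_filter.1 hp).1

theorem G_add_sum_eq (x : S) :
    G B h T c x + ∑ y ∈ T, sgn B h c y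
      = ∑ y ∈ T.filter (fun y => ¬ (B.ord h).le x y), sgn B h c y := by
  rw [G, ← sum_filter_add_sum_filter_not T (fun y => (B.ord h).le x y)]
  ring

theorem H_sub_sum_eq (x : S) :
    H B h T c x - ∑ y ∈ T, sgn B h c y
      = -∑ y ∈ T.filter (fun y => ¬ (B.ord h).le y x), sgn B h c y := by
  rw [H, ← sum_filter_add_sum_filter_not T (fun y => (B.ord h).le y x)]
  ring

theorem G_eq_neg_sgn_sub_sum {t : S} (ht : t ∈ T) :
    G B h T c t
      = -sgn B h c t - ∑ y ∈ T.filter (fun y => ¬ (B.ord h).le y t), sgn B h c y := by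
  let _ := B.ord h
  have hsplit : T.filter (fun y => (B.ord h).le t y)
      = insert t (T.filter fun y => ¬ (B.ord h).le y t) := by
    ext y
    simp only [mem_filter, mem_insert]
    constructor
    · rintro ⟨hy, hty⟩
      rcases eq_or_lt_of_le hty with rfl | hlt
      · exact Or.inl rfl
      · exact Or.inr ⟨hy, not_le.2 hlt⟩
    · rintro (rfl | ⟨hy, hyt⟩)
      · exact ⟨ht, le_rfl⟩
      · exact ⟨hy, (not_le.1 hyt).le⟩
  have hnot : t ∉ T.filter fun y => ¬ (B.ord h).le y t := fun hmem =>
    (mem_filter.1 hmem).2 le_rfl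
  rw [G, hsplit, sum_insert hnot]
  ring

theorem epsB_eq_phiB_sub_sum :
    epsB B h T c = phiB B h T c - ∑ y ∈ T, sgn B h c y := by
  have hT := sum_le_phiB_of_isInitialIn B h T c (isInitialIn_self _ T)
  refine le_antisymm ((epsB_le_iff B h T c).2 ⟨by linarith, fun x _ => ?_⟩) ?_
  · linarith [G_add_sum_eq B h T c x,
      sum_le_phiB_of_isInitialIn B h T c (isInitialIn_filter_not_le _ T x)]
  · suffices phiB B h T c ≤ epsB B h T c + ∑ y ∈ T, sgn B h c y by linarith
    have hT' := neg_sum_le_epsB_of_isFinalIn B h T c (isFinalIn_self _ T)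
    refine (phiB_le_iff B h T c).2 ⟨by linarith, fun x _ => ?_⟩
    linarith [H_sub_sum_eq B h T c x,
      neg_sum_le_epsB_of_isFinalIn B h T c (isFinalIn_filter_not_le _ T x)]

theorem goodElt_eq_some_iff {t : S} :
    goodElt B h T c = some t ↔ 0 < epsB B h T c ∧ t ∈ T ∧ G B h T c t = epsB B h T c ∧
      ∀ y ∈ T, G B h T c y = epsB B h T c → (B.ord h).le y t := by
  let _ := B.ord h
  unfold goodElt
  split_ifs with hne
  · rw [Option.some_inj]
    constructor
    · rintro rfl
      obtain ⟨hT, hpos, hG⟩ := mem_filter.1 (max'_mem _ hne)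
      exact ⟨hpos, hT, hG, fun y hy hGy => le_max' _ y (mem_filter.2 ⟨hy, hpos, hGy⟩)⟩
    · rintro ⟨hpos, hT, hG, hmax⟩
      obtain ⟨hmT, -, hGmax⟩ := mem_filter.1 (max'_mem _ hne)
      exact le_antisymm (hmax _ hmT hGmax)
        (le_max' _ t (mem_filter.2 ⟨hT, hpos, hG⟩))
  · refine iff_of_false not_false fun ⟨hpos, hT, hG, _⟩ => hne ?_
    exact ⟨t, mem_filter.2 ⟨hT, hpos, hG⟩⟩

theorem exists_goodElt_eq_some (hε : 0 < epsB B h T c) : ∃ t, goodElt B h T c = some t := by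
  obtain ⟨x, hx, hGx⟩ := exists_G_eq_epsB B h T c hε
  unfold goodElt
  rw [dif_pos ⟨x, mem_filter.2 ⟨hx, hε, hGx⟩⟩]
  exact ⟨_, rfl⟩

theorem cogoodElt_spec {s : S} (hs : cogoodElt B h T c = some s) :
    0 < phiB B h T c ∧ s ∈ T ∧ H B h T c s = phiB B h T c ∧
      ∀ y ∈ T, H B h T c y = phiB B h T c → (B.ord h).le s y := by
  let _ := B.ord h
  unfold cogoodElt at hs
  split_ifs at hs with hne
  obtain rfl := Option.some_inj.1 hs
  obtain ⟨hT, hpos, hH⟩ := mem_filter.1 (min'_mem _ hne)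
  exact ⟨hpos, hT, hH, fun y hy hHy => min'_le _ y (mem_filter.2 ⟨hy, hpos, hHy⟩)⟩

theorem H_lt_phiB_of_lt_cogoodElt {s x : S} (hs : cogoodElt B h T c = some s) (hx : x ∈ T)
    (hxs : (B.ord h).lt x s) : H B h T c x < phiB B h T c := by
  let _ := B.ord h
  exact lt_of_le_of_ne (H_le_phiB B h T c hx)
    fun he => not_le.2 hxs ((cogoodElt_spec B h T c hs).2.2.2 x hx he)

theorem G_lt_epsB_of_le_cogoodElt {s x : S} (hs : cogoodElt B h T c = some s)
    (hxs : (B.ord h).le x s) : G B h T c x < epsB B h T c := by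
  let _ := B.ord h
  suffices G B h T c x + ∑ y ∈ T, sgn B h c y < phiB B h T c by
    rw [epsB_eq_phiB_sub_sum]; linarith
  rw [G_add_sum_eq]
  rcases (T.filter fun y => ¬ (B.ord h).le x y).eq_empty_or_nonempty with hD | hne
  · rw [hD, sum_empty]
    exact (cogoodElt_spec B h T c hs).1
  · obtain ⟨p, hp, hD⟩ := (isInitialIn_filter_not_le _ T x).exists_eq_filter_le hne
    rw [hD]
    exact H_lt_phiB_of_lt_cogoodElt B h T c hs (mem_filter.1 hp).1
      (lt_of_lt_of_le (not_le.1 (mem_filter.1 hp).2) hxs)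

theorem sgn_eq_neg_one_of_goodElt_eq_some {t : S} (ht : goodElt B h T c = some t) :
    sgn B h c t = -1 := by
  obtain ⟨hpos, htT, hGt, hmax⟩ := (goodElt_eq_some_iff B h T c).1 ht
  have hU : -∑ y ∈ T.filter (fun y => ¬ (B.ord h).le y t), sgn B h c y < epsB B h T c := by
    rcases (T.filter fun y => ¬ (B.ord h).le y t).eq_empty_or_nonempty with hU | hne
    · rwa [hU, sum_empty, neg_zero]
    · obtain ⟨u, hu, hU⟩ := (isFinalIn_filter_not_le _ T t).exists_eq_filter_ge hne
      rw [hU]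
      exact lt_of_le_of_ne (G_le_epsB B h T c (mem_filter.1 hu).1)
        fun he => (mem_filter.1 hu).2 (hmax u (mem_filter.1 hu).1 he)
  linarith [G_eq_neg_sgn_sub_sum B h T c htT, neg_one_le_sgn B h c t]

end Signature

def LowersSgnAt (B : Biorder S) (h : Bool) (c c' : S → ℕ) (t : S) : Prop :=
  ∀ y, sgn B h c' y = sgn B h c y - if y = t then 1 else 0

theorem lowersSgnAt_update_sub_one (B : Biorder S) (h : Bool) {c : S → ℕ} {t : S}
    (hσ : sgn B h c t = -1) : LowersSgnAt B (!h) c (Function.update c t (c t - 1)) t := by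
  intro y
  rcases eq_or_ne y t with rfl | hy
  · unfold sgn at hσ ⊢
    rw [Function.update_self, if_pos rfl]
    generalize B.lab y = l at hσ ⊢
    generalize c y = n at hσ ⊢
    cases l <;> cases h <;> split_ifs at hσ ⊢ <;> simp_all
  · simp only [sgn, Function.update_of_ne hy, if_neg hy, sub_zero]

section LowersSgnAt

variable {B : Biorder S} {h : Bool} {T : Finset S} {c c' : S → ℕ} {t : S}

theorem LowersSgnAt.H_eq (hd : LowersSgnAt B h c c' t) (ht : t ∈ T) (x : S) :
    H B h T c' x = H B h T c x - if (B.ord h).le t x then 1 else 0 := by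
  unfold LowersSgnAt at hd
  simp only [H, hd, sum_sub_distrib, sum_ite_eq', mem_filter, ht, true_and]

theorem LowersSgnAt.G_eq (hd : LowersSgnAt B h c c' t) (ht : t ∈ T) (x : S) :
    G B h T c' x = G B h T c x + if (B.ord h).le x t then 1 else 0 := by
  unfold LowersSgnAt at hd
  simp only [G, hd, sum_sub_distrib, sum_ite_eq', mem_filter, ht, true_and]
  ring

theorem LowersSgnAt.sum_sgn_eq (hd : LowersSgnAt B h c c' t) (ht : t ∈ T) :
    ∑ y ∈ T, sgn B h c' y = ∑ y ∈ T, sgn B h c y - 1 := by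
  unfold LowersSgnAt at hd
  simp only [hd, sum_sub_distrib, sum_ite_eq', ht, if_true]

theorem LowersSgnAt.epsB_sub_phiB (hd : LowersSgnAt B h c c' t) (ht : t ∈ T) :
    epsB B h T c' - phiB B h T c' = epsB B h T c - phiB B h T c + 1 := by
  rw [epsB_eq_phiB_sub_sum, epsB_eq_phiB_sub_sum B h T c, hd.sum_sgn_eq ht]
  ring

theorem LowersSgnAt.phiB_le (hd : LowersSgnAt B h c c' t) (ht : t ∈ T) :
    phiB B h T c' ≤ phiB B h T c := by
  refine (phiB_le_iff B h T c').2 ⟨phiB_nonneg B h T c, fun x hx => ?_⟩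
  rw [hd.H_eq ht]
  split_ifs <;> linarith [H_le_phiB B h T c hx]

theorem LowersSgnAt.phiB_eq_of_cogoodElt_lt (hd : LowersSgnAt B h c c' t) (ht : t ∈ T) {s : S}
    (hs : cogoodElt B h T c = some s) (hst : (B.ord h).lt s t) :
    phiB B h T c' = phiB B h T c := by
  let _ := B.ord h
  obtain ⟨-, hsT, hHs, -⟩ := cogoodElt_spec B h T c hs
  refine le_antisymm (hd.phiB_le ht) ?_
  have := H_le_phiB B h T c' hsT
  rwa [hd.H_eq ht, if_neg (not_le.2 hst), sub_zero, hHs] at this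

theorem LowersSgnAt.phiB_eq_sub_one_of_le_cogoodElt (hd : LowersSgnAt B h c c' t) (ht : t ∈ T)
    {s : S} (hs : cogoodElt B h T c = some s) (hts : (B.ord h).le t s) :
    phiB B h T c' = phiB B h T c - 1 := by
  let _ := B.ord h
  obtain ⟨hφ, hsT, hHs, -⟩ := cogoodElt_spec B h T c hs
  refine le_antisymm ((phiB_le_iff B h T c').2 ⟨by linarith, fun x hx => ?_⟩) ?_
  · rw [hd.H_eq ht]
    split_ifs with htx
    · linarith [H_le_phiB B h T c hx]
    · linarith [H_lt_phiB_of_lt_cogoodElt B h T c hs hx (lt_of_lt_of_le (not_le.1 htx) hts)]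
  · have := H_le_phiB B h T c' hsT
    rwa [hd.H_eq ht, if_pos hts, hHs] at this

theorem LowersSgnAt.goodElt_eq_of_le_cogoodElt (hd : LowersSgnAt B h c c' t) (ht : t ∈ T)
    {s : S} (hs : cogoodElt B h T c = some s) (hts : (B.ord h).le t s)
    (hε : 0 < epsB B h T c) : goodElt B h T c' = goodElt B h T c := by
  let _ := B.ord h
  obtain ⟨x, hx⟩ := exists_goodElt_eq_some B h T c hε
  obtain ⟨-, hxT, hGx, hmax⟩ := (goodElt_eq_some_iff B h T c).1 hx
  have hεeq : epsB B h T c' = epsB B h T c := by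
    linarith [hd.epsB_sub_phiB ht, hd.phiB_eq_sub_one_of_le_cogoodElt ht hs hts]
  have hxt : ¬ (B.ord h).le x t := fun hxt =>
    (G_lt_epsB_of_le_cogoodElt B h T c hs (le_trans hxt hts)).ne hGx
  rw [hx, goodElt_eq_some_iff, hεeq, hd.G_eq ht, if_neg hxt, add_zero]
  refine ⟨hε, hxT, hGx, fun y hy hGy => ?_⟩
  rw [hd.G_eq ht] at hGy
  by_cases hyt : (B.ord h).le y t
  · exact le_trans hyt (not_le.1 hxt).le
  · rw [if_neg hyt, add_zero] at hGy
    exact hmax y hy hGy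

end LowersSgnAt

theorem eps_phi_change_under_etilde_general (S : Type) [Fintype S] (B : Biorder S)
    (a b : S → ℕ)
    (hb : et B true Finset.univ a = some b) :
    (phiB B false Finset.univ a = 0 →
      epsB B false Finset.univ b = epsB B false Finset.univ a + 1 ∧
      phiB B false Finset.univ b = phiB B false Finset.univ a) ∧
    (0 < phiB B false Finset.univ a →
      ∀ t s : S, goodElt B true Finset.univ a = some t →
        cogoodElt B false Finset.univ a = some s →
        (B.ltj s t →
          epsB B false Finset.univ b = epsB B false Finset.univ a + 1 ∧
          phiB B false Finset.univ b = phiB B false Finset.univ a) ∧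
        ((B.ord false).le t s →
          epsB B false Finset.univ b = epsB B false Finset.univ a ∧
          phiB B false Finset.univ b = phiB B false Finset.univ a - 1 ∧
          (0 < epsB B false Finset.univ a →
            goodElt B false Finset.univ b = goodElt B false Finset.univ a))) := by
  obtain ⟨t, hgood, rfl⟩ := Option.map_eq_some_iff.1 hb
  have hd : LowersSgnAt B false a (Function.update a t (a t - 1)) t :=
    lowersSgnAt_update_sub_one B true (sgn_eq_neg_one_of_goodElt_eq_some B true univ a hgood)
  have ht := mem_univ t
  have hshift := hd.epsB_sub_phiB ht
  refine ⟨fun hφ => ?_, fun _ t' s ht' hs => ?_⟩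
  · have hφ' := le_antisymm (hφ ▸ hd.phiB_le ht) (phiB_nonneg B false univ _)
    exact ⟨by linarith, by rw [hφ', hφ]⟩
  obtain rfl : t = t' := Option.some_injective _ (hgood.symm.trans ht')
  refine ⟨fun hst => ?_, fun hts => ?_⟩
  · have hφ' := hd.phiB_eq_of_cogoodElt_lt ht hs hst
    exact ⟨by linarith, hφ'⟩
  · have hφ' := hd.phiB_eq_sub_one_of_le_cogoodElt ht hs hts
    exact ⟨by linarith, hφ', hd.goodElt_eq_of_le_cogoodElt ht hs hts⟩

/-- Lemma 4.9 of the paper (here `true` plays the role of the label `i` and `false` that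
of the label `j`): how `ε_j` and `φ_j` change when `ẽ_i` is applied. -/
theorem eps_phi_change_under_etilde (S : Type) [Fintype S] (B : Biorder S)
    (a b : S → ℕ) (ha : ∀ s, a s ≤ 2)
    (hb : et B true Finset.univ a = some b) :
    (phiB B false Finset.univ a = 0 →
      epsB B false Finset.univ b = epsB B false Finset.univ a + 1 ∧
      phiB B false Finset.univ b = phiB B false Finset.univ a) ∧
    (0 < phiB B false Finset.univ a →
      ∀ t s : S, goodElt B true Finset.univ a = some t →
        cogoodElt B false Finset.univ a = some s →
        (B.ltj s t →
          epsB B false Finset.univ b = epsB B false Finset.univ a + 1 ∧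
          phiB B false Finset.univ b = phiB B false Finset.univ a) ∧
        ((B.ord false).le t s →
          epsB B false Finset.univ b = epsB B false Finset.univ a ∧
          phiB B false Finset.univ b = phiB B false Finset.univ a - 1 ∧
          (0 < epsB B false Finset.univ a →
            goodElt B false Finset.univ b = goodElt B false Finset.univ a))) :=
  eps_phi_change_under_etilde_general S B a b hb

end BiorderCrystal
end

section
/- Suppose S is a biorder. There is no good configuration a for S such that ẽ_i a ≠ 0, f̃_i a ≠ 0, ε_j(ẽ_i a) = ε_j(a), and φ_j(f̃_i a) = φ_j(a). -/
/-!  Biorders and configurations (Section 4 of the paper).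

A biorder is a finite set `S` with two linear orders `>_i`, `>_j` and a labelling
`Γ : S → {i, j}` (here modelled by `Bool`, with `true` standing for the label `i` and
`false` for the label `j`), such that `s >_i t` and `t >_j s` force `Γ s = j` and `Γ t = i`.

A configuration is a function `a : S → ℕ` taking values in `{0, 1, 2}`.

All signature-related notions are defined relative to a finite subset `T ⊆ S`
(the biorder restricted to `T`); the notions for the biorder `S` itself are recovered
by taking `T = Finset.univ`. -/

attribute [local instance] Classical.propDecidable

namespace BiorderCrystal

variable {S : Type}

variable [Fintype S]

set_option linter.unusedSectionVars false

section Aux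

namespace Sig
variable {S : Type} [Fintype S] (L : LinearOrder S) (π : S → ℤ)

noncomputable def gval (s : S) : ℤ := -(∑ t ∈ Finset.univ.filter (fun t => L.le s t), π t)
noncomputable def hval (s : S) : ℤ := ∑ t ∈ Finset.univ.filter (fun t => L.le t s), π t
noncomputable def ghat (s : S) : ℤ := -(∑ t ∈ Finset.univ.filter (fun t => L.lt s t), π t)
noncomputable def hhat (s : S) : ℤ := ∑ t ∈ Finset.univ.filter (fun t => L.lt t s), π t
noncomputable def eps : ℤ := Finset.univ.fold max 0 (gval L π)
noncomputable def phi : ℤ := Finset.univ.fold max 0 (hval L π)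

lemma gval_le (s : S) : gval L π s ≤ eps L π :=
  (Finset.le_fold_max _).mpr (Or.inr ⟨s, Finset.mem_univ s, le_rfl⟩)

lemma hval_le (s : S) : hval L π s ≤ phi L π :=
  (Finset.le_fold_max _).mpr (Or.inr ⟨s, Finset.mem_univ s, le_rfl⟩)

lemma eps_nonneg : 0 ≤ eps L π := (Finset.le_fold_max _).mpr (Or.inl le_rfl)

lemma phi_nonneg : 0 ≤ phi L π := (Finset.le_fold_max _).mpr (Or.inl le_rfl)

lemma exists_hval_attainer (hphi : 0 < phi L π) : ∃ x, hval L π x = phi L π := by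
  by_contra hc
  push_neg at hc
  have h2 : phi L π ≤ phi L π - 1 := by
    have : Finset.univ.fold max (0:ℤ) (hval L π) ≤ phi L π - 1 :=
      (Finset.fold_max_le _).mpr ⟨by linarith, fun x _ => by
        have h3 := hval_le L π x
        have h4 := hc x
        have : hval L π x < phi L π := lt_of_le_of_ne h3 h4
        linarith⟩
    exact this
  linarith

lemma sum_split_le (s : S) : (∑ t, π t) = hval L π s - ghat L π s := by
  letI := L
  have key := Finset.sum_filter_add_sum_filter_not Finset.univ (fun t => L.le t s) π
  have hfe : Finset.univ.filter (fun t => ¬ L.le t s) = Finset.univ.filter (fun t => L.lt s t) := by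
    apply Finset.filter_congr
    intro t _
    exact not_le
  rw [hfe] at key
  unfold hval ghat
  linarith [key]

lemma sum_split_ge (s : S) : (∑ t, π t) = hhat L π s - gval L π s := by
  letI := L
  have key := Finset.sum_filter_add_sum_filter_not Finset.univ (fun t => L.le s t) π
  have hfe : Finset.univ.filter (fun t => ¬ L.le s t) = Finset.univ.filter (fun t => L.lt t s) := by
    apply Finset.filter_congr
    intro t _
    exact not_le
  rw [hfe] at key
  unfold hhat gval
  linarith [key]

lemma gsplit (s : S) : gval L π s = ghat L π s - π s := by
  letI := L
  unfold gval ghat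
  have hfe : Finset.univ.filter (fun t => L.le s t)
      = insert s (Finset.univ.filter (fun t => L.lt s t)) := by
    ext t
    simp only [Finset.mem_filter, Finset.mem_univ, true_and, Finset.mem_insert]
    constructor
    · intro h
      rcases lt_or_eq_of_le h with h' | h'
      · exact Or.inr h'
      · exact Or.inl h'.symm
    · rintro (rfl | h)
      · exact le_rfl
      · exact le_of_lt h
  rw [hfe, Finset.sum_insert (by simp)]
  ring

lemma hsplit (s : S) : hval L π s = hhat L π s + π s := by
  letI := L
  unfold hval hhat
  have hfe : Finset.univ.filter (fun t => L.le t s)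
      = insert s (Finset.univ.filter (fun t => L.lt t s)) := by
    ext t
    simp only [Finset.mem_filter, Finset.mem_univ, true_and, Finset.mem_insert]
    constructor
    · intro h
      rcases lt_or_eq_of_le h with h' | h'
      · exact Or.inr h'
      · exact Or.inl h'
    · rintro (rfl | h)
      · exact le_rfl
      · exact le_of_lt h
  rw [hfe, Finset.sum_insert (by simp)]
  ring

lemma succ_ex (x z : S) (hxz : L.lt x z) :
    ∃ y, L.lt x y ∧ L.le y z ∧ gval L π y = ghat L π x := by
  letI := L
  have hz : z ∈ Finset.univ.filter (fun t => L.lt x t) := by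
    simp only [Finset.mem_filter, Finset.mem_univ, true_and]
    exact hxz
  have hne : (Finset.univ.filter (fun t => L.lt x t)).Nonempty := ⟨z, hz⟩
  set y := (Finset.univ.filter (fun t => L.lt x t)).min' hne with hydef
  have hymem := Finset.min'_mem _ hne
  have hxy : L.lt x y := (Finset.mem_filter.mp hymem).2
  refine ⟨y, hxy, Finset.min'_le _ z hz, ?_⟩
  unfold gval ghat
  congr 1
  apply Finset.sum_congr
  · apply Finset.filter_congr
    intro t _
    constructor
    · intro h
      exact lt_of_lt_of_le hxy h
    · intro h
      exact Finset.min'_le _ t (by simp only [Finset.mem_filter, Finset.mem_univ, true_and]; exact h)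
  · intro t _
    rfl

lemma pred_ex (x z : S) (hzx : L.lt z x) :
    ∃ y, L.lt y x ∧ L.le z y ∧ hval L π y = hhat L π x := by
  letI := L
  have hz : z ∈ Finset.univ.filter (fun t => L.lt t x) := by
    simp only [Finset.mem_filter, Finset.mem_univ, true_and]
    exact hzx
  have hne : (Finset.univ.filter (fun t => L.lt t x)).Nonempty := ⟨z, hz⟩
  set y := (Finset.univ.filter (fun t => L.lt t x)).max' hne with hydef
  have hymem := Finset.max'_mem _ hne
  have hyx : L.lt y x := (Finset.mem_filter.mp hymem).2
  refine ⟨y, hyx, Finset.le_max' _ z hz, ?_⟩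
  unfold hval hhat
  apply Finset.sum_congr
  · apply Finset.filter_congr
    intro t _
    constructor
    · intro h
      exact lt_of_le_of_lt h hyx
    · intro h
      exact Finset.le_max' _ t (by simp only [Finset.mem_filter, Finset.mem_univ, true_and]; exact h)
  · intro t _
    rfl

lemma ghat_le (x : S) : ghat L π x ≤ eps L π := by
  letI := L
  rcases (Finset.univ.filter (fun t => L.lt x t)).eq_empty_or_nonempty with he | ⟨z, hz⟩
  · have h0 : ghat L π x = 0 := by unfold ghat; rw [he]; simp
    rw [h0]; exact eps_nonneg L π
  · have hxz := (Finset.mem_filter.mp hz).2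
    obtain ⟨y, _, _, hy⟩ := succ_ex L π x z hxz
    rw [← hy]
    exact gval_le L π y

lemma hhat_le (x : S) : hhat L π x ≤ phi L π := by
  letI := L
  rcases (Finset.univ.filter (fun t => L.lt t x)).eq_empty_or_nonempty with he | ⟨z, hz⟩
  · have h0 : hhat L π x = 0 := by unfold hhat; rw [he]; simp
    rw [h0]; exact phi_nonneg L π
  · have hzx := (Finset.mem_filter.mp hz).2
    obtain ⟨y, _, _, hy⟩ := pred_ex L π x z hzx
    rw [← hy]
    exact hval_le L π y

lemma phi_eq : phi L π = (∑ t, π t) + eps L π := by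
  letI := L
  rcases (Finset.univ (α := S)).eq_empty_or_nonempty with hS | hS
  · have h1 : phi L π = 0 := by unfold phi; rw [hS]; rfl
    have h2 : eps L π = 0 := by unfold eps; rw [hS]; rfl
    have h3 : (∑ t, π t) = 0 := by rw [hS]; rfl
    rw [h1, h2, h3]; ring
  · apply le_antisymm
    · have : Finset.univ.fold max (0:ℤ) (hval L π) ≤ (∑ t, π t) + eps L π := by
        refine (Finset.fold_max_le _).mpr ⟨?_, fun x _ => ?_⟩
        · have hb : gval L π (Finset.univ.min' hS) = -(∑ t, π t) := by
            unfold gval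
            rw [Finset.filter_true_of_mem (fun t _ => Finset.min'_le _ t (Finset.mem_univ t))]
          have h4 := gval_le L π (Finset.univ.min' hS)
          rw [hb] at h4
          linarith
        · have h5 := sum_split_le L π x
          have h6 := ghat_le L π x
          linarith
      exact this
    · have key : eps L π ≤ phi L π - (∑ t, π t) := by
        have : Finset.univ.fold max (0:ℤ) (gval L π) ≤ phi L π - (∑ t, π t) := by
          refine (Finset.fold_max_le _).mpr ⟨?_, fun x _ => ?_⟩
          · have ht : hval L π (Finset.univ.max' hS) = ∑ t, π t := by
              unfold hval
              rw [Finset.filter_true_of_mem (fun t _ => Finset.le_max' _ t (Finset.mem_univ t))]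
            have h4 := hval_le L π (Finset.univ.max' hS)
            rw [ht] at h4
            linarith
          · have h5 := sum_split_ge L π x
            have h6 := hhat_le L π x
            linarith
        exact this
      linarith

lemma e_contra (u x : S) (hE : ∀ t, L.le t u → gval L π t ≤ eps L π - 1)
    (hx : hval L π x = phi L π) (hxu : L.lt x u) : False := by
  have hs := sum_split_le L π x
  have hp := phi_eq L π
  have hghx : ghat L π x = eps L π := by linarith
  obtain ⟨y, _, hyu, hy⟩ := succ_ex L π x u hxu
  have hEy := hE y hyu
  rw [hy, hghx] at hEy
  linarith

lemma iside (hb : ∀ s, -1 ≤ π s ∧ π s ≤ 1) (u v : S)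
    (hue : gval L π u = eps L π) (heps : 0 < eps L π)
    (humax : ∀ s, gval L π s = eps L π → L.le s u)
    (hve : hval L π v = phi L π) (hphi : 0 < phi L π)
    (hvmin : ∀ s, hval L π s = phi L π → L.le v s) :
    π u = -1 ∧ π v = 1 ∧ L.lt v u := by
  letI := L
  have hghu : ghat L π u ≤ eps L π - 1 := by
    rcases (Finset.univ.filter (fun t => L.lt u t)).eq_empty_or_nonempty with he | ⟨z, hz⟩
    · have h0 : ghat L π u = 0 := by unfold ghat; rw [he]; simp
      rw [h0]; linarith
    · obtain ⟨y, huy, _, hy⟩ := succ_ex L π u z (Finset.mem_filter.mp hz).2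
      have h3 := gval_le L π y
      have h4 : gval L π y ≠ eps L π := fun hq => absurd (humax y hq) (not_le.mpr huy)
      rw [← hy]
      have := lt_of_le_of_ne h3 h4
      linarith
  have hpiu : π u = -1 := by
    have hspl := gsplit L π u
    have h5 := (hb u).1
    have h6 : π u ≤ -1 := by linarith
    exact le_antisymm h6 h5
  have hhhv : hhat L π v ≤ phi L π - 1 := by
    rcases (Finset.univ.filter (fun t => L.lt t v)).eq_empty_or_nonempty with he | ⟨z, hz⟩
    · have h0 : hhat L π v = 0 := by unfold hhat; rw [he]; simp
      rw [h0]; linarith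
    · obtain ⟨y, hyv, _, hy⟩ := pred_ex L π v z (Finset.mem_filter.mp hz).2
      have h3 := hval_le L π y
      have h4 : hval L π y ≠ phi L π := fun hq => absurd (hvmin y hq) (not_le.mpr hyv)
      rw [← hy]
      have := lt_of_le_of_ne h3 h4
      linarith
  have hpiv : π v = 1 := by
    have hspl := hsplit L π v
    have h5 := (hb v).2
    have h6 : 1 ≤ π v := by linarith
    exact le_antisymm h5 h6
  have hs := sum_split_le L π v
  have hp := phi_eq L π
  have hghv : ghat L π v = eps L π := by linarith
  rcases (Finset.univ.filter (fun t => L.lt v t)).eq_empty_or_nonempty with he | ⟨z, hz⟩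
  · exfalso
    have h0 : ghat L π v = 0 := by unfold ghat; rw [he]; simp
    rw [h0] at hghv
    linarith
  · obtain ⟨y, hvy, _, hy⟩ := succ_ex L π v z (Finset.mem_filter.mp hz).2
    have hyu := humax y (by rw [hy, hghv])
    exact ⟨hpiu, hpiv, lt_of_lt_of_le hvy hyu⟩

lemma lt_of_not_le' {s t : S} (h : ¬ L.le s t) : L.lt t s := by
  letI := L; exact not_le.mp h

lemma not_le_of_lt' {s t : S} (h : L.lt s t) : ¬ L.le t s := by
  letI := L; exact not_le.mpr h

lemma lt_of_lt_of_le' {s t w : S} (h : L.lt s t) (h' : L.le t w) : L.lt s w := by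
  letI := L; exact lt_of_lt_of_le h h'

lemma lt_of_le_of_ne' {s t : S} (h : L.le s t) (h' : s ≠ t) : L.lt s t := by
  letI := L; exact lt_of_le_of_ne h h'

end Sig

variable {S : Type} [Fintype S]

lemma sgn_bounds (B : Biorder S) (h : Bool) (a : S → ℕ) (s : S) :
    -1 ≤ sgn B h a s ∧ sgn B h a s ≤ 1 := by
  unfold sgn; split_ifs <;> norm_num

lemma sgn_eq_neg_one {B : Biorder S} {a : S → ℕ} {s : S} (hs : sgn B true a s = -1) :
    (B.lab s = true ∧ a s = 1) ∨ (B.lab s = false ∧ a s = 2) := by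
  unfold sgn at hs
  split_ifs at hs with hc1 hc2
  rcases hc2 with ⟨h2a, h2b⟩ | ⟨h2a, h2b⟩
  · exact Or.inl ⟨h2b, h2a⟩
  · exact Or.inr ⟨by simpa using h2b, h2a⟩

lemma sgn_eq_one_true {B : Biorder S} {a : S → ℕ} {s : S} (hs : sgn B true a s = 1) :
    (B.lab s = true ∧ a s = 0) ∨ (B.lab s = false ∧ a s = 1) := by
  unfold sgn at hs
  split_ifs at hs with hc1 hc2
  rcases hc1 with ⟨h1a, h1b⟩ | ⟨h1a, h1b⟩
  · exact Or.inl ⟨h1b, h1a⟩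
  · exact Or.inr ⟨by simpa using h1b, h1a⟩
  · exact absurd hs (by norm_num)

lemma sgn_eq_one_false {B : Biorder S} {a : S → ℕ} {s : S} (hs : sgn B false a s = 1) :
    (B.lab s = false ∧ a s = 0) ∨ (B.lab s = true ∧ a s = 1) := by
  unfold sgn at hs
  split_ifs at hs with hc1 hc2
  rcases hc1 with ⟨h1a, h1b⟩ | ⟨h1a, h1b⟩
  · exact Or.inl ⟨h1b, h1a⟩
  · exact Or.inr ⟨by simpa using h1b, h1a⟩
  · exact absurd hs (by norm_num)

lemma sum_update_delta (π π' : S → ℤ) (u : S) (d : ℤ)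
    (hne : ∀ s, s ≠ u → π' s = π s) (hu : π' u = π u + d) (F : Finset S) :
    ∑ s ∈ F, π' s = (∑ s ∈ F, π s) + (if u ∈ F then d else 0) := by
  have hcong : ∀ s ∈ F, π' s = π s + (if s = u then d else 0) := by
    intro s _
    by_cases hsu : s = u
    · subst hsu; simp [hu]
    · simp [hne s hsu, hsu]
  rw [Finset.sum_congr rfl hcong, Finset.sum_add_distrib,
    Finset.sum_ite_eq' F u (fun _ => d)]

lemma ord_true (B : Biorder S) : B.ord true = B.li := by simp [Biorder.ord]

lemma ord_false (B : Biorder S) : B.ord false = B.lj := by simp [Biorder.ord]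

end Aux


/-- Lemma 4.10 of the paper (here `true` plays the role of the label `i` and `false` that
of `j`): there is no good configuration `a` with `ẽ_i a ≠ 0`, `f̃_i a ≠ 0`,
`ε_j(ẽ_i a) = ε_j(a)` and `φ_j(f̃_i a) = φ_j(a)`. -/
theorem no_bad_A2_configuration (S : Type) [Fintype S] (B : Biorder S)
    (a b c : S → ℕ) (ha : ∀ s, a s ≤ 2)
    (hgood : IsGoodOn B Finset.univ a)
    (he : et B true Finset.univ a = some b)
    (hf : ft B true Finset.univ a = some c)
    (h1 : epsB B false Finset.univ b = epsB B false Finset.univ a)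
    (h2 : phiB B false Finset.univ c = phiB B false Finset.univ a) :
    False := by
  unfold et at he
  unfold ft at hf
  obtain ⟨u, hgu, hbu⟩ := Option.map_eq_some_iff.mp he
  obtain ⟨v, hgv, hcv⟩ := Option.map_eq_some_iff.mp hf
  subst hbu
  subst hcv
  unfold goodElt at hgu
  unfold cogoodElt at hgv
  by_cases hne : (Finset.univ.filter fun s =>
      0 < epsB B true Finset.univ a ∧ G B true Finset.univ a s = epsB B true Finset.univ a).Nonempty
  case neg => rw [dif_neg hne] at hgu; exact absurd hgu (by simp)
  rw [dif_pos hne] at hgu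
  by_cases hne' : (Finset.univ.filter fun s =>
      0 < phiB B true Finset.univ a ∧ H B true Finset.univ a s = phiB B true Finset.univ a).Nonempty
  case neg => rw [dif_neg hne'] at hgv; exact absurd hgv (by simp)
  rw [dif_pos hne'] at hgv
  have hu : @Finset.max' S (B.ord true) _ hne = u := Option.some.inj hgu
  have hv : @Finset.min' S (B.ord true) _ hne' = v := Option.some.inj hgv
  have humem : u ∈ (Finset.univ.filter fun s =>
      0 < epsB B true Finset.univ a ∧ G B true Finset.univ a s = epsB B true Finset.univ a) :=
    hu ▸ @Finset.max'_mem S (B.ord true) _ hne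
  have hvmem : v ∈ (Finset.univ.filter fun s =>
      0 < phiB B true Finset.univ a ∧ H B true Finset.univ a s = phiB B true Finset.univ a) :=
    hv ▸ @Finset.min'_mem S (B.ord true) _ hne'
  obtain ⟨-, hepsi, hGu⟩ := Finset.mem_filter.mp humem
  obtain ⟨-, hphii, hHv⟩ := Finset.mem_filter.mp hvmem
  have humax : ∀ s, G B true Finset.univ a s = epsB B true Finset.univ a →
      (B.ord true).le s u := fun s hs =>
    hu ▸ @Finset.le_max' S (B.ord true) _ s (Finset.mem_filter.mpr ⟨Finset.mem_univ s, hepsi, hs⟩)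
  have hvmin : ∀ s, H B true Finset.univ a s = phiB B true Finset.univ a →
      (B.ord true).le v s := fun s hs =>
    hv ▸ @Finset.min'_le S (B.ord true) _ s (Finset.mem_filter.mpr ⟨Finset.mem_univ s, hphii, hs⟩)
  -- i-side facts
  obtain ⟨hpiu, hpiv, hvu⟩ :=
    Sig.iside (B.ord true) (sgn B true a) (fun s => sgn_bounds B true a s) u v
      hGu hepsi humax hHv hphii hvmin
  have hlivu : B.li.lt v u := by rw [← ord_true B]; exact hvu
  have hTu := sgn_eq_neg_one hpiu
  have hTv := sgn_eq_one_true hpiv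
  -- the modification of the j-sign at u and at v
  have hbju : sgn B false (Function.update a u (a u - 1)) u = sgn B false a u + (-1) := by
    rcases hTu with ⟨hl, hval2⟩ | ⟨hl, hval2⟩ <;>
      simp [sgn, Function.update_self, hl, hval2]
  have hbne : ∀ s, s ≠ u →
      sgn B false (Function.update a u (a u - 1)) s = sgn B false a s := by
    intro s hsu
    unfold sgn
    rw [Function.update_of_ne hsu]
  have hcjv : sgn B false (Function.update a v (a v + 1)) v = sgn B false a v + 1 := by
    rcases hTv with ⟨hl, hval2⟩ | ⟨hl, hval2⟩ <;>
      simp [sgn, Function.update_self, hl, hval2]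
  have hcne : ∀ s, s ≠ v →
      sgn B false (Function.update a v (a v + 1)) s = sgn B false a s := by
    intro s hsv
    unfold sgn
    rw [Function.update_of_ne hsv]
  -- condition (E)
  have hE : ∀ t, (B.ord false).le t u →
      Sig.gval (B.ord false) (sgn B false a) t ≤ Sig.eps (B.ord false) (sgn B false a) - 1 := by
    intro t ht
    have humem2 : u ∈ Finset.univ.filter (fun s => (B.ord false).le t s) :=
      Finset.mem_filter.mpr ⟨Finset.mem_univ u, ht⟩
    have hsum := sum_update_delta (sgn B false a) (sgn B false (Function.update a u (a u - 1))) u (-1)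
      hbne hbju (Finset.univ.filter (fun s => (B.ord false).le t s))
    rw [if_pos humem2] at hsum
    have hGbt : Sig.gval (B.ord false) (sgn B false (Function.update a u (a u - 1))) t
        = Sig.gval (B.ord false) (sgn B false a) t + 1 := by
      unfold Sig.gval
      rw [hsum]
      ring
    have hle2 := Sig.gval_le (B.ord false) (sgn B false (Function.update a u (a u - 1))) t
    have hkey : Sig.eps (B.ord false) (sgn B false (Function.update a u (a u - 1)))
        = Sig.eps (B.ord false) (sgn B false a) := h1
    rw [hGbt, hkey] at hle2
    linarith
  -- condition (F)
  have hF : ∀ t, (B.ord false).le v t →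
      Sig.hval (B.ord false) (sgn B false a) t ≤ Sig.phi (B.ord false) (sgn B false a) - 1 := by
    intro t ht
    have hvmem2 : v ∈ Finset.univ.filter (fun s => (B.ord false).le s t) :=
      Finset.mem_filter.mpr ⟨Finset.mem_univ v, ht⟩
    have hsum := sum_update_delta (sgn B false a) (sgn B false (Function.update a v (a v + 1))) v 1
      hcne hcjv (Finset.univ.filter (fun s => (B.ord false).le s t))
    rw [if_pos hvmem2] at hsum
    have hHct : Sig.hval (B.ord false) (sgn B false (Function.update a v (a v + 1))) t
        = Sig.hval (B.ord false) (sgn B false a) t + 1 := by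
      unfold Sig.hval
      rw [hsum]
    have hle2 := Sig.hval_le (B.ord false) (sgn B false (Function.update a v (a v + 1))) t
    have hkey : Sig.phi (B.ord false) (sgn B false (Function.update a v (a v + 1)))
        = Sig.phi (B.ord false) (sgn B false a) := h2
    rw [hHct, hkey] at hle2
    linarith
  -- φ_j(a) ≥ 1
  have hSne : (Finset.univ : Finset S).Nonempty := ⟨u, Finset.mem_univ u⟩
  have hbotle : ∀ s : S, (B.ord false).le (@Finset.min' S (B.ord false) Finset.univ hSne) s :=
    fun s => @Finset.min'_le S (B.ord false) _ s (Finset.mem_univ s)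
  have hgbot : Sig.gval (B.ord false) (sgn B false a) (@Finset.min' S (B.ord false) Finset.univ hSne)
      = -(∑ t, (sgn B false a) t) := by
    unfold Sig.gval
    rw [Finset.filter_true_of_mem (fun t _ => hbotle t)]
  have hEbot := hE _ (hbotle u)
  rw [hgbot] at hEbot
  have hphieq := Sig.phi_eq (B.ord false) (sgn B false a)
  have hphipos : 0 < Sig.phi (B.ord false) (sgn B false a) := by linarith
  -- the least φ_j-attainer x
  obtain ⟨x0, hx0⟩ := Sig.exists_hval_attainer (B.ord false) (sgn B false a) hphipos
  have hFatne : (Finset.univ.filter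
      (fun s => Sig.hval (B.ord false) (sgn B false a) s = Sig.phi (B.ord false) (sgn B false a))).Nonempty :=
    ⟨x0, Finset.mem_filter.mpr ⟨Finset.mem_univ _, hx0⟩⟩
  set x := @Finset.min' S (B.ord false) _ hFatne with hxdef
  have hxmem := @Finset.min'_mem S (B.ord false) _ hFatne
  have hxat : Sig.hval (B.ord false) (sgn B false a) x = Sig.phi (B.ord false) (sgn B false a) :=
    (Finset.mem_filter.mp hxmem).2
  have hxmin : ∀ s, (B.ord false).lt s x →
      Sig.hval (B.ord false) (sgn B false a) s ≤ Sig.phi (B.ord false) (sgn B false a) - 1 := by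
    intro s hs
    have hle3 := Sig.hval_le (B.ord false) (sgn B false a) s
    by_cases hq : Sig.hval (B.ord false) (sgn B false a) s = Sig.phi (B.ord false) (sgn B false a)
    · exfalso
      have hxs : (B.ord false).le x s := @Finset.min'_le S (B.ord false) _ s
        (Finset.mem_filter.mpr ⟨Finset.mem_univ s, hq⟩)
      exact Sig.not_le_of_lt' (B.ord false) hs hxs
    · have := lt_of_le_of_ne hle3 hq
      linarith
  -- x lies strictly j-below v
  have hxv : (B.ord false).lt x v := by
    apply Sig.lt_of_not_le' (B.ord false)
    intro hvx
    have := hF x hvx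
    rw [hxat] at this
    linarith
  -- main case distinction on the j-order relation between u and v
  by_cases hvu2 : (B.ord false).le v u
  · -- u is j-above v : impossible
    exact Sig.e_contra (B.ord false) (sgn B false a) u x hE hxat
      (Sig.lt_of_lt_of_le' (B.ord false) hxv hvu2)
  · -- v is strictly j-above u
    have huv : (B.ord false).lt u v := Sig.lt_of_not_le' (B.ord false) hvu2
    have hujv : B.lj.lt u v := by rw [← ord_false B]; exact huv
    obtain ⟨hlabu, hlabv⟩ := B.compat u v hlivu hujv
    have hau : a u = 2 := by
      rcases hTu with ⟨hl, hval2⟩ | ⟨hl, hval2⟩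
      · rw [hl] at hlabu; exact absurd hlabu (by simp)
      · exact hval2
    have hav : a v = 0 := by
      rcases hTv with ⟨hl, hval2⟩ | ⟨hl, hval2⟩
      · exact hval2
      · rw [hl] at hlabv; exact absurd hlabv (by simp)
    have hpju : (sgn B false a) u = 0 := by
      simp [sgn, hlabu, hau]
    by_cases hxu2 : (B.ord false).le x u
    · -- x is j-below u : impossible
      have hgx := hE x hxu2
      have hsplit2 := Sig.gsplit (B.ord false) (sgn B false a) x
      have hss := Sig.sum_split_le (B.ord false) (sgn B false a) x
      have hpx : 1 ≤ (sgn B false a) x := by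
        linarith only [hgx, hsplit2, hss, hxat, hphieq]
      have hxneu : x ≠ u := fun hq => by rw [hq, hpju] at hpx; linarith only [hpx]
      exact Sig.e_contra (B.ord false) (sgn B false a) u x hE hxat
        (Sig.lt_of_le_of_ne' (B.ord false) hxu2 hxneu)
    · -- x lies strictly j-between u and v : a G2 violation
      have hux : (B.ord false).lt u x := Sig.lt_of_not_le' (B.ord false) hxu2
      have hujx : B.lj.lt u x := by rw [← ord_false B]; exact hux
      have hxjv : B.lj.lt x v := by rw [← ord_false B]; exact hxv
      have hhhx : Sig.hhat (B.ord false) (sgn B false a) x ≤ Sig.phi (B.ord false) (sgn B false a) - 1 := by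
        rcases (Finset.univ.filter (fun t => (B.ord false).lt t x)).eq_empty_or_nonempty with
          hem | ⟨z, hz⟩
        · have h0 : Sig.hhat (B.ord false) (sgn B false a) x = 0 := by
            unfold Sig.hhat; rw [hem]; simp
          rw [h0]; linarith only [hphipos]
        · obtain ⟨y, hyx, -, hy⟩ :=
            Sig.pred_ex (B.ord false) (sgn B false a) x z (Finset.mem_filter.mp hz).2
          rw [← hy]
          exact hxmin y hyx
      have hpx1 : (sgn B false a) x = 1 := by
        have hsp := Sig.hsplit (B.ord false) (sgn B false a) x
        have hbd := sgn_bounds B false a x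
        have h6 : 1 ≤ (sgn B false a) x := by linarith only [hsp, hxat, hhhx]
        exact le_antisymm hbd.2 h6
      rcases sgn_eq_one_false hpx1 with ⟨hlx, hax⟩ | ⟨hlx, hax⟩
      · -- lab x = j and a x = 0 : contradict G2 with the pair (x, u)
        refine hgood.2.1 ⟨x, Finset.mem_univ x, u, Finset.mem_univ u, Or.inr hujx, ?_, ?_, ?_⟩
        · exact Relation.TransGen.head
            ⟨Finset.mem_univ u, Finset.mem_univ v, Or.inl hlivu⟩
            (Relation.TransGen.single ⟨Finset.mem_univ v, Finset.mem_univ x, Or.inr hxjv⟩)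
        · rw [hlx, hlabu]
        · rw [hax, hau]; norm_num
      · -- lab x = i and a x = 1 : contradict G2 with the pair (v, x)
        refine hgood.2.1 ⟨v, Finset.mem_univ v, x, Finset.mem_univ x, Or.inr hxjv, ?_, ?_, ?_⟩
        · exact Relation.TransGen.head
            ⟨Finset.mem_univ x, Finset.mem_univ u, Or.inr hujx⟩
            (Relation.TransGen.single ⟨Finset.mem_univ u, Finset.mem_univ v, Or.inl hlivu⟩)
        · rw [hlabv, hlx]
        · rw [hav, hax]; norm_num


end BiorderCrystal
end

section
/- Suppose S is a transitive biorder, i.e. s ▷ t for every pair of distinct elements s, t ∈ S. Then the only good configuration a for S satisfying ẽ_i a = 0 and ẽ_j a = 0 is the zero configuration a ≡ 0. -/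
/-!  Biorders and configurations (Section 4 of the paper).

A biorder is a finite set `S` with two linear orders `>_i`, `>_j` and a labelling
`Γ : S → {i, j}` (here modelled by `Bool`, with `true` standing for the label `i` and
`false` for the label `j`), such that `s >_i t` and `t >_j s` force `Γ s = j` and `Γ t = i`.

A configuration is a function `a : S → ℕ` taking values in `{0, 1, 2}`.

All signature-related notions are defined relative to a finite subset `T ⊆ S`
(the biorder restricted to `T`); the notions for the biorder `S` itself are recovered
by taking `T = Finset.univ`. -/

attribute [local instance] Classical.propDecidable

namespace BiorderCrystal

variable {S : Type}

/-! A source has nonnegative suffix sums in both signatures, so every `-` of the `h`-signature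
has a `+` above it in `>_h`; and G2 together with transitivity says that `s ⋗ t` with
`Γ s = Γ t` forces `a t ≤ a s`.

If some entry is `1`, let `m` be the `>_i`-highest one; by G1 it is also the `>_j`-highest one.
The `+` above the `-` of `m` in the `Γ m`-signature is then neither a `1` nor a `0` of label `Γ m`.

If some entry of label `b` is `2`, let `q` be the highest one in the other order `>_{¬b}`. It
contributes a `-` to the `¬b`-signature, so it is not `>_{¬b}`-maximal. In a transitive biorder
the `>_c`-maximum carries the label `¬c` (nothing lies above it in both orders), so the
`>_{¬b}`-maximum has label `b`, dominates `q`, hence is a `2` of label `b` above `q`. -/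

namespace Biorder

variable (B : Biorder S)

theorem gd_iff_exists_ord_lt {s t : S} : B.gd s t ↔ ∃ c, (B.ord c).lt t s := by
  constructor
  · rintro (h | h)
    exacts [⟨true, h⟩, ⟨false, h⟩]
  · rintro ⟨_ | _, h⟩
    exacts [Or.inr h, Or.inl h]

theorem ord_lt_of_not_lt {c : Bool} {s t : S} (h : ¬ (B.ord c).lt s t) (hne : s ≠ t) :
    (B.ord c).lt t s := by
  let _ := B.ord c
  exact lt_of_le_of_ne (not_lt.mp h) hne.symm

theorem lab_eq_not_of_crossing {c : Bool} {s t : S} (h₁ : (B.ord c).lt t s)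
    (h₂ : (B.ord (!c)).lt s t) : B.lab s = !c := by
  cases c
  · exact (B.compat t s h₂ h₁).2
  · exact (B.compat s t h₁ h₂).1

theorem exists_gd_of_triOn {T : Finset S} {s t : S} (h : B.triOn T s t) : ∃ y, B.gd y t := by
  cases h with
  | single h => exact ⟨s, h.2.2⟩
  | tail _ h => exact ⟨_, h.2.2⟩

variable [Fintype S]

def IsTransitive : Prop := ∀ s t : S, s ≠ t → B.triOn Finset.univ s t

theorem exists_ord_max (c : Bool) {p : S → Prop} (hp : ∃ x, p x) :
    ∃ m, p m ∧ ∀ x, p x → ¬ (B.ord c).lt m x := by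
  let _ := B.ord c
  obtain ⟨x, hx⟩ := hp
  obtain ⟨m, hm, hmax⟩ := (Finset.univ.filter p).exists_max_image id
    ⟨x, Finset.mem_filter.mpr ⟨Finset.mem_univ x, hx⟩⟩
  exact ⟨m, (Finset.mem_filter.mp hm).2, fun y hy =>
    not_lt.mpr (hmax y (Finset.mem_filter.mpr ⟨Finset.mem_univ y, hy⟩))⟩

variable {B}

theorem IsTransitive.lab_eq_not_of_isMax (hB : B.IsTransitive) {c : Bool} {w t : S}
    (hw : ∀ y, ¬ (B.ord c).lt w y) (ht : t ≠ w) : B.lab w = !c := by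
  obtain ⟨y, hy⟩ := B.exists_gd_of_triOn (hB t w ht)
  obtain ⟨d, hwy⟩ := B.gd_iff_exists_ord_lt.mp hy
  obtain rfl : d = !c := by
    cases c <;> cases d <;> first | rfl | exact absurd hwy (hw y)
  have hyw : y ≠ w := by
    let _ := B.ord (!c)
    exact hwy.ne'
  exact B.lab_eq_not_of_crossing (B.ord_lt_of_not_lt (hw y) hyw.symm) hwy

end Biorder

section Signature

variable {B : Biorder S} {h : Bool} {a : S → ℕ} {s : S}

theorem sgn_lab_of_eq_one (hs : a s = 1) : sgn B (B.lab s) a s = -1 := by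
  simp [sgn, hs]

theorem sgn_not_lab_of_eq_two (hs : a s = 2) : sgn B (!B.lab s) a s = -1 := by
  simp [sgn, hs]

theorem eq_zero_or_eq_one_of_sgn_pos (hs : 0 < sgn B h a s) :
    (a s = 0 ∧ B.lab s = h) ∨ a s = 1 := by
  unfold sgn at hs
  split_ifs at hs with h₁ h₂ <;> first | omega | tauto

variable {T : Finset S}

theorem G_nonpos_of_et_eq_none (he : et B h T a = none) (hs : s ∈ T) : G B h T a s ≤ 0 := by
  by_contra! hpos
  obtain ⟨m, hmT, hmax⟩ := T.exists_max_image (G B h T a) ⟨s, hs⟩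
  have heps : epsB B h T a = G B h T a m :=
    le_antisymm ((Finset.fold_max_le _).mpr ⟨(hpos.trans_le (hmax s hs)).le, hmax⟩)
      ((Finset.le_fold_max _).mpr (Or.inr ⟨m, hmT, le_rfl⟩))
  have hne : (T.filter fun x => 0 < epsB B h T a ∧ G B h T a x = epsB B h T a).Nonempty :=
    ⟨m, Finset.mem_filter.mpr ⟨hmT, heps ▸ hpos.trans_le (hmax s hs), heps.symm⟩⟩
  simp [et, goodElt, dif_pos hne] at he

theorem exists_lt_sgn_pos_of_et_eq_none (he : et B h T a = none) (hs : s ∈ T)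
    (hneg : sgn B h a s = -1) : ∃ x ∈ T, (B.ord h).lt s x ∧ 0 < sgn B h a x := by
  let _ := B.ord h
  by_contra! hno
  have hmem : s ∈ T.filter fun t => (B.ord h).le s t := Finset.mem_filter.mpr ⟨hs, le_rfl⟩
  have hrest : ∑ t ∈ (T.filter fun t => (B.ord h).le s t).erase s, sgn B h a t ≤ 0 := by
    refine Finset.sum_nonpos fun x hx => ?_
    obtain ⟨hxs, hx⟩ := Finset.mem_erase.mp hx
    obtain ⟨hxT, hsx⟩ := Finset.mem_filter.mp hx
    exact hno x hxT (lt_of_le_of_ne hsx (Ne.symm hxs))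
  have hsplit := Finset.sum_erase_add _ (sgn B h a) hmem
  have hG := G_nonpos_of_et_eq_none he hs
  rw [G] at hG
  omega

end Signature

namespace IsGoodOn

variable [Fintype S] {B : Biorder S} {a : S → ℕ}

theorem le_of_gd (hgood : IsGoodOn B Finset.univ a) (hB : B.IsTransitive) {s t : S}
    (hlab : B.lab s = B.lab t) (hst : B.gd s t) : a t ≤ a s := by
  by_contra! hlt
  have hne : t ≠ s := fun h => hlt.ne (congrArg a h.symm)
  exact hgood.2.1 ⟨s, Finset.mem_univ s, t, Finset.mem_univ t, hst, hB t s hne, hlab, hlt⟩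

theorem ne_one (hgood : IsGoodOn B Finset.univ a) (hB : B.IsTransitive)
    (hsrc : ∀ h, et B h Finset.univ a = none) (s : S) : a s ≠ 1 := by
  intro hs
  obtain ⟨m, hm, hmax⟩ := B.exists_ord_max true (p := fun x => a x = 1) ⟨s, hs⟩
  have hmax' : ∀ c x, a x = 1 → ¬ (B.ord c).lt m x := by
    rintro (_ | _) x hx hmx
    · have hxm : x ≠ m := by
        let _ := B.lj
        exact hmx.ne'
      exact hgood.1 ⟨m, Finset.mem_univ m, x, Finset.mem_univ x,
        B.ord_lt_of_not_lt (hmax x hx) hxm.symm, hmx, hm, hx⟩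
    · exact hmax x hx hmx
  obtain ⟨x, -, hmx, hx⟩ :=
    exists_lt_sgn_pos_of_et_eq_none (hsrc (B.lab m)) (Finset.mem_univ m) (sgn_lab_of_eq_one hm)
  rcases eq_zero_or_eq_one_of_sgn_pos hx with ⟨hx0, hxlab⟩ | hx1
  · have := hgood.le_of_gd hB hxlab (B.gd_iff_exists_ord_lt.mpr ⟨_, hmx⟩)
    omega
  · exact hmax' _ x hx1 hmx

theorem ne_two (hgood : IsGoodOn B Finset.univ a) (hB : B.IsTransitive) (ha : ∀ s, a s ≤ 2)
    (hsrc : ∀ h, et B h Finset.univ a = none) (s : S) : a s ≠ 2 := by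
  intro hs
  obtain ⟨q, ⟨hqb, hq⟩, hqmax⟩ :=
    B.exists_ord_max (!B.lab s) (p := fun x => B.lab x = B.lab s ∧ a x = 2) ⟨s, rfl, hs⟩
  obtain ⟨x, -, hqx, -⟩ := exists_lt_sgn_pos_of_et_eq_none (hsrc (!B.lab s))
    (Finset.mem_univ q) (hqb ▸ sgn_not_lab_of_eq_two hq)
  obtain ⟨w, -, hwmax⟩ := B.exists_ord_max (!B.lab s) (p := fun _ => True) ⟨x, trivial⟩
  have hqw : (B.ord (!B.lab s)).lt q w := by
    let _ := B.ord (!B.lab s)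
    exact lt_of_lt_of_le hqx (not_lt.mp (hwmax x trivial))
  have hqw' : q ≠ w := by
    let _ := B.ord (!B.lab s)
    exact hqw.ne
  have hwlab : B.lab w = B.lab s := by
    simpa using hB.lab_eq_not_of_isMax (fun y => hwmax y trivial) hqw'
  have hw : a w = 2 := le_antisymm (ha w) (hq ▸ hgood.le_of_gd hB (hwlab.trans hqb.symm)
    (B.gd_iff_exists_ord_lt.mpr ⟨_, hqw⟩))
  exact hqmax w ⟨hwlab, hw⟩ hqw

end IsGoodOn

/-- Proposition 4.12 of the paper: if the biorder `S` is transitive (i.e. `s ▷ t` for all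
distinct `s, t`), then the only good configuration which is a source (killed by both
`ẽ_i` and `ẽ_j`) is the zero configuration. -/
theorem transitive_biorder_unique_source (S : Type) [Fintype S] (B : Biorder S)
    (htrans : ∀ s t : S, s ≠ t → B.triOn Finset.univ s t)
    (a : S → ℕ) (ha : ∀ s, a s ≤ 2)
    (hgood : IsGoodOn B Finset.univ a)
    (h1 : et B true Finset.univ a = none)
    (h2 : et B false Finset.univ a = none) :
    a = fun _ => 0 := by
  have hsrc : ∀ h, et B h Finset.univ a = none := by
    rintro (_ | _) <;> assumption
  funext s
  have := ha s
  have := hgood.ne_one htrans hsrc s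
  have := hgood.ne_two htrans ha hsrc s
  omega

end BiorderCrystal
end
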